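/- arXiv:1804.10970 — 2 statements merged into one kernel-verified Lean document; each statement's English description precedes it below -/
import Mathlib

section
/- Assume (μ,σ,f) satisfies (k-MLLC) for some k ∈ ℕ with k ≥ 1. Then the partial derivative φ⁽ᵏ⁾_{z⁽ᵏ⁾} can be expressed as a function of θ₁ only: there exists a function g on Θ₁ with values in the linear maps from ℝ^{(m×d)×_k n} to ℝ^{m×_k n} such that for every θ_k = (t,x,y⁽⁰⁾,z⁽⁰⁾,…,y⁽ᵏ⁾,z⁽ᵏ⁾) ∈ Θ_k the derivative of φ⁽ᵏ⁾ with respect to z⁽ᵏ⁾ at θ_k equals g(θ₁), where θ₁ = (t,x,y⁽⁰⁾,z⁽⁰⁾,y⁽¹⁾,z⁽¹⁾). Moreover, if L_{σ,z} = 0, then g is merely a function of θ_{1−} := (t,x,y⁽⁰⁾,z⁽⁰⁾,y⁽¹⁾), i.e. it does not depend on z⁽¹⁾ either. -/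
namespace DecouplingFBSDE

/-! ### Generalized matrices

`Tens n m k` is the space `ℝ^{m×_k n}` of real valued maps on `[m]×[n]^k`;
`TensZ n m d k` is the space `ℝ^{(m×d)×_k n}` of real valued maps on `[m]×[d]×[n]^k`. -/

/-- `ℝ^{m×_k n}`. -/
abbrev Tens (n m k : ℕ) : Type := Fin m → (Fin k → Fin n) → ℝ

/-- `ℝ^{(m×d)×_k n}`. -/
abbrev TensZ (n m d k : ℕ) : Type := Fin m → Fin d → (Fin k → Fin n) → ℝ

/-- `ℝ^{n×d}`, the space of values of `σ`. -/
abbrev Sig (n d : ℕ) : Type := Fin n → Fin d → ℝ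

/-- The space of the variables `(x, y⁽⁰⁾, z⁽⁰⁾)` (identifying `ℝᵐ` with `Tens n m 0`
and `ℝ^{m×d}` with `TensZ n m d 0`). -/
abbrev Arg (n m d : ℕ) : Type := (Fin n → ℝ) × Tens n m 0 × TensZ n m d 0

variable {n m d : ℕ}

/-- Frobenius norm on `Tens n m k`. -/
noncomputable def frobT {k : ℕ} (y : Tens n m k) : ℝ :=
  Real.sqrt (∑ a, ∑ c, (y a c) ^ 2)

/-- Frobenius norm on `TensZ n m d k`. -/
noncomputable def frobTZ {k : ℕ} (z : TensZ n m d k) : ℝ :=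
  Real.sqrt (∑ a, ∑ b, ∑ c, (z a b c) ^ 2)

/-- Frobenius norm on `ℝ^{n×d}`. -/
noncomputable def frobS (s : Sig n d) : ℝ :=
  Real.sqrt (∑ i, ∑ j, (s i j) ^ 2)

/-- `y⁽¹⁾ ∈ ℝ^{m×_1 n}` as an ordinary `m×n` matrix. -/
def mat1 (v : Tens n m 1) : Matrix (Fin m) (Fin n) ℝ :=
  Matrix.of fun a i => v a (fun _ => i)

/-- Operator norm of `y⁽¹⁾ ∈ ℝ^{m×n}` with respect to the Euclidean norms. -/
noncomputable def opN (v : Tens n m 1) : ℝ :=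
  ‖LinearMap.toContinuousLinearMap (Matrix.toEuclideanLin (mat1 v))‖

/-- Standard basis vector of `ℝⁿ`. -/
def eX (c : Fin n) : Fin n → ℝ := Pi.single c 1

/-- Standard basis vector of `ℝᵐ ≅ Tens n m 0`. -/
def eY (a : Fin m) : Tens n m 0 := fun a' _ => if a' = a then 1 else 0

/-- Standard basis element of `ℝ^{m×d} ≅ TensZ n m d 0`. -/
def eZ (a : Fin m) (b : Fin d) : TensZ n m d 0 :=
  fun a' b' _ => if a' = a ∧ b' = b then 1 else 0

/-- `σ_x(θ)` applied to a direction `v ∈ ℝⁿ`. -/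
noncomputable def sx (σ : ℝ → Arg n m d → Sig n d) (t : ℝ) (p : Arg n m d)
    (v : Fin n → ℝ) : Sig n d := fderiv ℝ (σ t) p (v, 0, 0)

/-- `σ_y(θ)` applied to a direction `w ∈ ℝᵐ`. -/
noncomputable def sy (σ : ℝ → Arg n m d → Sig n d) (t : ℝ) (p : Arg n m d)
    (w : Tens n m 0) : Sig n d := fderiv ℝ (σ t) p (0, w, 0)

/-- `σ_z(θ)` applied to a direction `ζ ∈ ℝ^{m×d}`. -/
noncomputable def sz (σ : ℝ → Arg n m d → Sig n d) (t : ℝ) (p : Arg n m d)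
    (ζ : TensZ n m d 0) : Sig n d := fderiv ℝ (σ t) p (0, 0, ζ)

/-- `μ_x(θ)` applied to a direction `v ∈ ℝⁿ`. -/
noncomputable def mx (μ : ℝ → Arg n m d → (Fin n → ℝ)) (t : ℝ) (p : Arg n m d)
    (v : Fin n → ℝ) : Fin n → ℝ := fderiv ℝ (μ t) p (v, 0, 0)

/-- `μ_y(θ)` applied to a direction `w ∈ ℝᵐ`. -/
noncomputable def my (μ : ℝ → Arg n m d → (Fin n → ℝ)) (t : ℝ) (p : Arg n m d)
    (w : Tens n m 0) : Fin n → ℝ := fderiv ℝ (μ t) p (0, w, 0)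

/-- `μ_z(θ)` applied to a direction `ζ ∈ ℝ^{m×d}`. -/
noncomputable def mz (μ : ℝ → Arg n m d → (Fin n → ℝ)) (t : ℝ) (p : Arg n m d)
    (ζ : TensZ n m d 0) : Fin n → ℝ := fderiv ℝ (μ t) p (0, 0, ζ)

/-- The generalized matrix `Id_{m×d} − y⁽¹⁾σ_z(θ) ∈ ℝ^{(m×d)×(m×d)}`, viewed as an
`(m·d)×(m·d)` matrix. -/
noncomputable def Gmat (σ : ℝ → Arg n m d → Sig n d) (t : ℝ) (p : Arg n m d)
    (y1 : Tens n m 1) : Matrix (Fin m × Fin d) (Fin m × Fin d) ℝ :=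
  1 - Matrix.of fun ab pq => ∑ i, mat1 y1 ab.1 i * sz σ t p (eZ pq.1 pq.2) i ab.2

/-- `y⁽¹⁾σ_x(θ) + y⁽¹⁾σ_y(θ)y⁽¹⁾ + z⁽¹⁾ ∈ ℝ^{(m×d)×n}`. -/
noncomputable def Rh (σ : ℝ → Arg n m d → Sig n d) (t : ℝ) (p : Arg n m d)
    (y1 : Tens n m 1) (z1 : TensZ n m d 1) : TensZ n m d 1 :=
  fun a b c =>
    (∑ i, mat1 y1 a i * sx σ t p (eX (c 0)) i b)
    + (∑ j, (∑ i, mat1 y1 a i * sy σ t p (eY j) i b) * mat1 y1 j (c 0))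
    + z1 a b c

/-- `h⁽¹⁾(θ₁) := (Id_{m×d} − y⁽¹⁾σ_z(θ))⁻¹ (y⁽¹⁾σ_x(θ) + y⁽¹⁾σ_y(θ)y⁽¹⁾ + z⁽¹⁾)`. -/
noncomputable def h1 (σ : ℝ → Arg n m d → Sig n d) (t : ℝ) (p : Arg n m d)
    (y1 : Tens n m 1) (z1 : TensZ n m d 1) : TensZ n m d 1 :=
  fun a b c =>
    ∑ pq : Fin m × Fin d, (Gmat σ t p y1)⁻¹ (a, b) pq * Rh σ t p y1 z1 pq.1 pq.2 c

/-- The `n×n` matrix `σ⁽ᵇ⁾_x(θ) + σ⁽ᵇ⁾_y(θ)y⁽¹⁾ + σ⁽ᵇ⁾_z(θ)h⁽¹⁾(θ₁)` for the `b`-th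
column of `σ`. -/
noncomputable def Bmat (σ : ℝ → Arg n m d → Sig n d) (t : ℝ) (p : Arg n m d)
    (y1 : Tens n m 1) (z1 : TensZ n m d 1) (b : Fin d) : Fin n → Fin n → ℝ :=
  fun i c =>
    sx σ t p (eX c) i b
    + (∑ a, sy σ t p (eY a) i b * mat1 y1 a c)
    + ∑ pq : Fin m × Fin d,
        sz σ t p (eZ pq.1 pq.2) i b * h1 σ t p y1 z1 pq.1 pq.2 (fun _ => c)

/-- The `n×n` matrix `μ_x(θ) + μ_y(θ)y⁽¹⁾ + μ_z(θ)h⁽¹⁾(θ₁)`. -/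
noncomputable def Amat (μ : ℝ → Arg n m d → (Fin n → ℝ)) (σ : ℝ → Arg n m d → Sig n d)
    (t : ℝ) (p : Arg n m d) (y1 : Tens n m 1) (z1 : TensZ n m d 1) :
    Fin n → Fin n → ℝ :=
  fun i c =>
    mx μ t p (eX c) i
    + (∑ a, my μ t p (eY a) i * mat1 y1 a c)
    + ∑ pq : Fin m × Fin d,
        mz μ t p (eZ pq.1 pq.2) i * h1 σ t p y1 z1 pq.1 pq.2 (fun _ => c)

/-- Product of a generalized matrix `y ∈ ℝ^{m×_{k+1} n}` with an `n×n` matrix `A`,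
contracting the trailing index of `y` with the first index of `A`. -/
def mulRight {k : ℕ} (y : Tens n m (k + 1)) (A : Fin n → Fin n → ℝ) :
    Tens n m (k + 1) :=
  fun a c => ∑ j, y a (Fin.snoc (Fin.init c) j) * A j (c (Fin.last k))

/-- `h⁽ᵏ⁾(θ_k)` for `k ≥ 2`:
`h⁽ᵏ'ʲ⁾(θ_k) = z⁽ᵏ'ʲ⁾ + y⁽ᵏ⁾(σ⁽ʲ⁾_x(θ) + σ⁽ʲ⁾_y(θ)y⁽¹⁾ + σ⁽ʲ⁾_z(θ)h⁽¹⁾(θ₁))`. -/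
noncomputable def hK (σ : ℝ → Arg n m d → Sig n d) (t : ℝ) (p : Arg n m d)
    (y1 : Tens n m 1) (z1 : TensZ n m d 1) {k : ℕ}
    (yk : Tens n m (k + 1)) (zk : TensZ n m d (k + 1)) : TensZ n m d (k + 1) :=
  fun a b c => zk a b c + mulRight yk (Bmat σ t p y1 z1 b) a c

/-- `h⁽ᵏ⁾` for every `k ≥ 1`: `h⁽¹⁾` for `k = 1` and the affine formula for `k ≥ 2`. -/
noncomputable def hGen (σ : ℝ → Arg n m d → Sig n d) (t : ℝ) (p : Arg n m d)
    (y1 : Tens n m 1) (z1 : TensZ n m d 1) :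
    {k : ℕ} → Tens n m (k + 1) → TensZ n m d (k + 1) → TensZ n m d (k + 1)
  | 0, yk, zk => h1 σ t p yk zk
  | _ + 1, yk, zk => hK σ t p y1 z1 yk zk

/-- The state space `(x, y⁽⁰⁾, z⁽⁰⁾, …, y⁽ⁱ⁾, z⁽ⁱ⁾)` of the spatial variables
of `Θ_i`. -/
abbrev EE (n m d i : ℕ) : Type :=
  (Fin n → ℝ) × ((j : Fin (i + 1)) → Tens n m j) × ((j : Fin (i + 1)) → TensZ n m d j)

/-- `φ_x(θ) ∈ ℝ^{m×_i n×n}`, reassembled as an element of `ℝ^{m×_{i+1} n}` (the trailing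
index runs through the `x`-directions). -/
def appX {i : ℕ} (L : (Fin n → ℝ) → Tens n m i) : Tens n m (i + 1) :=
  fun a c => L (eX (c (Fin.last i))) a (Fin.init c)

/-- Product `φ_{y⁽ʲ⁾}(θ)·y`, applying the linear map `L` slice-wise in the trailing
index of `y ∈ ℝ^{m×_{j+1} n}`. -/
def appY {j i : ℕ} (L : Tens n m j → Tens n m i) (y : Tens n m (j + 1)) :
    Tens n m (i + 1) :=
  fun a c => L (fun a' c' => y a' (Fin.snoc c' (c (Fin.last i)))) a (Fin.init c)

/-- Product `φ_{z⁽ʲ⁾}(θ)·z`, applying the linear map `L` slice-wise in the trailing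
index of `z ∈ ℝ^{(m×d)×_{j+1} n}`. -/
def appZ {j i : ℕ} (L : TensZ n m d j → Tens n m i) (z : TensZ n m d (j + 1)) :
    Tens n m (i + 1) :=
  fun a c => L (fun a' b' c' => z a' b' (Fin.snoc c' (c (Fin.last i)))) a (Fin.init c)

/-- Partial derivative in the direction of `x`, extracted from a total derivative. -/
noncomputable def Dx {i : ℕ} (D : EE n m d i →L[ℝ] Tens n m i) :
    (Fin n → ℝ) → Tens n m i :=
  fun v => D (v, 0, 0)

/-- Partial derivative in the direction of `y⁽ʲ⁾`, extracted from a total derivative. -/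
noncomputable def Dyp {i : ℕ} (D : EE n m d i →L[ℝ] Tens n m i) (j : Fin (i + 1)) :
    Tens n m j → Tens n m i :=
  fun w => D (0, Pi.single j w, 0)

/-- Partial derivative in the direction of `z⁽ʲ⁾`, extracted from a total derivative. -/
noncomputable def Dzp {i : ℕ} (D : EE n m d i →L[ℝ] Tens n m i) (j : Fin (i + 1)) :
    TensZ n m d j → Tens n m i :=
  fun w => D (0, 0, Pi.single j w)

/-- The type of the function `φ⁽ⁱ⁾`. -/
abbrev PhiFun (n m d i : ℕ) : Type := ℝ → EE n m d i → Tens n m i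

/-- The right hand side of the recursion defining `φ⁽ⁱ⁺¹⁾` from the derivative `D`
of `φ⁽ⁱ⁾`:
`φ⁽ⁱ⁺¹⁾ = φ⁽ⁱ⁾_x + Σ_j (φ⁽ⁱ⁾_{y⁽ʲ⁾}y⁽ʲ⁺¹⁾ + φ⁽ⁱ⁾_{z⁽ʲ⁾}h⁽ʲ⁺¹⁾)
         − y⁽ⁱ⁺¹⁾(μ_x + μ_y y⁽¹⁾ + μ_z h⁽¹⁾) − Σ_b z⁽ⁱ⁺¹'ᵇ⁾(σ⁽ᵇ⁾_x + σ⁽ᵇ⁾_y y⁽¹⁾ + σ⁽ᵇ⁾_z h⁽¹⁾)`. -/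
noncomputable def phiStep {i : ℕ} (μ : ℝ → Arg n m d → (Fin n → ℝ))
    (σ : ℝ → Arg n m d → Sig n d) (t : ℝ) (D : EE n m d i →L[ℝ] Tens n m i)
    (x : Fin n → ℝ) (Y : (j : Fin (i + 2)) → Tens n m j)
    (Z : (j : Fin (i + 2)) → TensZ n m d j) : Tens n m (i + 1) :=
  (appX (Dx D)
      + ∑ j : Fin (i + 1),
          (appY (Dyp D j) (Y j.succ)
            + appZ (Dzp D j)
                (hGen σ t (x, Y ⟨0, by omega⟩, Z ⟨0, by omega⟩)
                  (Y ⟨1, by omega⟩) (Z ⟨1, by omega⟩) (Y j.succ) (Z j.succ))))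
    - mulRight (Y (Fin.last (i + 1)))
        (Amat μ σ t (x, Y ⟨0, by omega⟩, Z ⟨0, by omega⟩)
          (Y ⟨1, by omega⟩) (Z ⟨1, by omega⟩))
    - ∑ b : Fin d,
        mulRight (fun a c => Z (Fin.last (i + 1)) a b c)
          (Bmat σ t (x, Y ⟨0, by omega⟩, Z ⟨0, by omega⟩)
            (Y ⟨1, by omega⟩) (Z ⟨1, by omega⟩) b)

/-- The family `(φ⁽⁰⁾, …, φ⁽ᵏ⁾)` satisfies the defining recursion of the generators
of the backward equations for the spatial derivatives of the decoupling field: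
`φ⁽⁰⁾ = f` and, at every point of `Θ_{i+1}`, `φ⁽ⁱ⁾` is (classically) differentiable
in `(x, y⁽⁰⁾, z⁽⁰⁾, …, y⁽ⁱ⁾, z⁽ⁱ⁾)` and `φ⁽ⁱ⁺¹⁾` is given by the recursion formula. -/
structure IsPhiChain (n m d k : ℕ) (T Lz : ℝ)
    (μ : ℝ → Arg n m d → (Fin n → ℝ)) (σ : ℝ → Arg n m d → Sig n d)
    (f : ℝ → Arg n m d → Tens n m 0)
    (φ : (i : ℕ) → PhiFun n m d i) : Prop where
  base : ∀ t ∈ Set.Icc (0:ℝ) T, ∀ p : EE n m d 0,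
    φ 0 t p = f t (p.1, p.2.1 ⟨0, by omega⟩, p.2.2 ⟨0, by omega⟩)
  step : ∀ i : ℕ, i + 1 ≤ k → ∀ t ∈ Set.Icc (0:ℝ) T,
    ∀ (x : Fin n → ℝ) (Y : (j : Fin (i + 2)) → Tens n m j)
      (Z : (j : Fin (i + 2)) → TensZ n m d j),
      Lz * opN (Y ⟨1, by omega⟩) < 1 →
      ∃ D : EE n m d i →L[ℝ] Tens n m i,
        HasFDerivAt (φ i t) D (x, fun j => Y j.castSucc, fun j => Z j.castSucc) ∧
        φ (i + 1) t (x, Y, Z) = phiStep μ σ t D x Y Z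

/-- The modified local Lipschitz conditions `(k-MLLC)` for `(μ,σ,f)`:
`μ, σ, f` are deterministic, `k` times classically differentiable in `(x,y,z)`,
they and their derivatives up to order `k` are Lipschitz continuous in `(x,y,z)`
on sets with bounded `z`-component (uniformly in `t ∈ [0,T]`),
`‖μ(·,0,0,0)‖_∞, ‖f(·,0,0,0)‖_∞, ‖σ(·,·,·,0)‖_∞ < ∞`, and `σ` is Lipschitz
continuous in `z` with constant `Lz` with respect to Frobenius norms. -/
structure MLLC (n m d k : ℕ) (T : ℝ)
    (μ : ℝ → Arg n m d → (Fin n → ℝ)) (σ : ℝ → Arg n m d → Sig n d)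
    (f : ℝ → Arg n m d → Tens n m 0) (Lz : ℝ) : Prop where
  smooth_mu : ∀ t ∈ Set.Icc (0:ℝ) T, ContDiff ℝ (k : ℕ∞) (μ t)
  smooth_sigma : ∀ t ∈ Set.Icc (0:ℝ) T, ContDiff ℝ (k : ℕ∞) (σ t)
  smooth_f : ∀ t ∈ Set.Icc (0:ℝ) T, ContDiff ℝ (k : ℕ∞) (f t)
  lipschitz_on_bounded : ∀ R : ℝ, ∃ L : NNReal, ∀ t ∈ Set.Icc (0:ℝ) T, ∀ j : ℕ, j ≤ k →
    LipschitzOnWith L (iteratedFDeriv ℝ j (μ t)) {p : Arg n m d | frobTZ p.2.2 ≤ R} ∧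
    LipschitzOnWith L (iteratedFDeriv ℝ j (σ t)) {p : Arg n m d | frobTZ p.2.2 ≤ R} ∧
    LipschitzOnWith L (iteratedFDeriv ℝ j (f t)) {p : Arg n m d | frobTZ p.2.2 ≤ R}
  bounded_at_zero : ∃ C : ℝ, ∀ t ∈ Set.Icc (0:ℝ) T,
    ‖μ t 0‖ ≤ C ∧ ‖f t 0‖ ≤ C ∧ ∀ (x : Fin n → ℝ) (y : Tens n m 0), ‖σ t (x, y, 0)‖ ≤ C
  lz_nonneg : 0 ≤ Lz
  lz_lipschitz : ∀ t ∈ Set.Icc (0:ℝ) T, ∀ (x : Fin n → ℝ) (y : Tens n m 0)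
    (z z' : TensZ n m d 0),
    frobS (σ t (x, y, z) - σ t (x, y, z')) ≤ Lz * frobTZ (z - z')


/-! ### Auxiliary continuous linear maps -/

section Aux

/-- Coordinate evaluation on `TensZ` as a continuous linear map. -/
noncomputable def evZ {k : ℕ} (a : Fin m) (b : Fin d) (c : Fin k → Fin n) :
    TensZ n m d k →L[ℝ] ℝ :=
  let p1 : TensZ n m d k →L[ℝ] (Fin d → (Fin k → Fin n) → ℝ) := ContinuousLinearMap.proj a
  let p2 : (Fin d → (Fin k → Fin n) → ℝ) →L[ℝ] ((Fin k → Fin n) → ℝ) := ContinuousLinearMap.proj b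
  let p3 : ((Fin k → Fin n) → ℝ) →L[ℝ] ℝ := ContinuousLinearMap.proj c
  p3.comp (p2.comp p1)

@[simp] lemma evZ_apply {k : ℕ} (a : Fin m) (b : Fin d) (c : Fin k → Fin n)
    (w : TensZ n m d k) : evZ a b c w = w a b c := rfl

/-- Coordinate evaluation on `Tens` as a continuous linear map. -/
noncomputable def evT {k : ℕ} (a : Fin m) (c : Fin k → Fin n) :
    Tens n m k →L[ℝ] ℝ :=
  let p1 : Tens n m k →L[ℝ] ((Fin k → Fin n) → ℝ) := ContinuousLinearMap.proj a
  let p2 : ((Fin k → Fin n) → ℝ) →L[ℝ] ℝ := ContinuousLinearMap.proj c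
  p2.comp p1

@[simp] lemma evT_apply {k : ℕ} (a : Fin m) (c : Fin k → Fin n)
    (w : Tens n m k) : evT a c w = w a c := rfl

/-- Slicing the trailing index of a `TensZ` at a fixed value, as a CLM. -/
noncomputable def sliceL {k : ℕ} (j : Fin n) :
    TensZ n m d (k + 1) →L[ℝ] TensZ n m d k :=
  ContinuousLinearMap.pi fun a => ContinuousLinearMap.pi fun b =>
    ContinuousLinearMap.pi fun c => evZ a b (Fin.snoc c j)

lemma sliceL_apply {k : ℕ} (j : Fin n) (w : TensZ n m d (k + 1)) :
    sliceL j w = fun a b c => w a b (Fin.snoc c j) := rfl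

/-- The inclusion `w ↦ (0, 0, Pi.single j w)` into `EE n m d i` as a CLM. -/
noncomputable def inZ {i : ℕ} (j : Fin (i + 1)) : TensZ n m d j →L[ℝ] EE n m d i :=
  LinearMap.toContinuousLinearMap
    ((0 : TensZ n m d j →ₗ[ℝ] (Fin n → ℝ)).prod
      ((0 : TensZ n m d j →ₗ[ℝ] ((j : Fin (i+1)) → Tens n m j)).prod
        (LinearMap.single ℝ (fun j : Fin (i+1) => TensZ n m d j) j)))

@[simp] lemma inZ_apply {i : ℕ} (j : Fin (i + 1)) (w : TensZ n m d j) :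
    inZ j w = ((0 : Fin n → ℝ), (0 : (j : Fin (i+1)) → Tens n m j), Pi.single j w) := by
  simp [inZ]

/-- `Dzp D j` as a continuous linear map. -/
noncomputable def DzpL {i : ℕ} (D : EE n m d i →L[ℝ] Tens n m i) (j : Fin (i + 1)) :
    TensZ n m d j →L[ℝ] Tens n m i :=
  D.comp (inZ j)

lemma DzpL_apply {i : ℕ} (D : EE n m d i →L[ℝ] Tens n m i) (j : Fin (i + 1))
    (w : TensZ n m d j) : DzpL D j w = Dzp D j w := by
  simp [DzpL, Dzp]

/-- `appZ` of a continuous linear map, as a continuous linear map. -/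
noncomputable def appZL {j i : ℕ} (G : TensZ n m d j →L[ℝ] Tens n m i) :
    TensZ n m d (j + 1) →L[ℝ] Tens n m (i + 1) :=
  ContinuousLinearMap.pi fun a => ContinuousLinearMap.pi fun c =>
    (evT a (Fin.init c)).comp (G.comp (sliceL (c (Fin.last i))))

lemma appZL_apply {j i : ℕ} (G : TensZ n m d j →L[ℝ] Tens n m i)
    (w : TensZ n m d (j + 1)) : appZL G w = appZ (⇑G) w := by
  funext a c
  show G (sliceL (c (Fin.last i)) w) a (Fin.init c)
      = G (fun a' b' c' => w a' b' (Fin.snoc c' (c (Fin.last i)))) a (Fin.init c)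
  rw [sliceL_apply]

/-- `w ↦ ∑ b, mulRight (w ·b·) (B b)` as a continuous linear map. -/
noncomputable def quadL {i : ℕ} (B : Fin d → Fin n → Fin n → ℝ) :
    TensZ n m d (i + 1) →L[ℝ] Tens n m (i + 1) :=
  ContinuousLinearMap.pi fun a => ContinuousLinearMap.pi fun c =>
    ∑ b, ∑ j, B b j (c (Fin.last i)) • evZ a b (Fin.snoc (Fin.init c) j)

lemma quadL_apply {i : ℕ} (B : Fin d → Fin n → Fin n → ℝ) (w : TensZ n m d (i + 1)) :
    quadL B w = ∑ b, mulRight (fun a c => w a b c) (B b) := by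
  funext a c
  show (∑ b, ∑ j, B b j (c (Fin.last i)) • evZ a b (Fin.snoc (Fin.init c) j)) w = _
  simp [mulRight, mul_comm, Finset.sum_apply]

end Aux
section Aux2

variable (μ : ℝ → Arg n m d → (Fin n → ℝ)) (σ : ℝ → Arg n m d → Sig n d)

/-- The linear part of `z⁽¹⁾ ↦ h⁽¹⁾(θ₁)` as a CLM. -/
noncomputable def GiL (t : ℝ) (p : Arg n m d) (y1 : Tens n m 1) :
    TensZ n m d 1 →L[ℝ] TensZ n m d 1 :=
  ContinuousLinearMap.pi fun a => ContinuousLinearMap.pi fun b =>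
    ContinuousLinearMap.pi fun c =>
      ∑ pq : Fin m × Fin d, (Gmat σ t p y1)⁻¹ (a, b) pq • evZ pq.1 pq.2 c

lemma GiL_apply (t : ℝ) (p : Arg n m d) (y1 : Tens n m 1) (δ : TensZ n m d 1)
    (a : Fin m) (b : Fin d) (c : Fin 1 → Fin n) :
    GiL σ t p y1 δ a b c
      = ∑ pq : Fin m × Fin d, (Gmat σ t p y1)⁻¹ (a, b) pq * δ pq.1 pq.2 c := by
  show (∑ pq : Fin m × Fin d, (Gmat σ t p y1)⁻¹ (a, b) pq • evZ pq.1 pq.2 c) δ = _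
  simp

lemma h1_add (t : ℝ) (p : Arg n m d) (y1 : Tens n m 1) (z δ : TensZ n m d 1) :
    h1 σ t p y1 (z + δ)
      = fun a b c => h1 σ t p y1 z a b c + GiL σ t p y1 δ a b c := by
  funext a b c
  rw [GiL_apply]
  simp only [h1, Rh, Pi.add_apply]
  rw [← Finset.sum_add_distrib]
  exact Finset.sum_congr rfl fun pq _ => by ring

/-- Linear part of `z⁽¹⁾ ↦ Amat`. -/
noncomputable def dA (t : ℝ) (p : Arg n m d) (y1 : Tens n m 1) (δ : TensZ n m d 1) :
    Fin n → Fin n → ℝ :=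
  fun i c => ∑ pq : Fin m × Fin d,
    mz μ t p (eZ pq.1 pq.2) i * GiL σ t p y1 δ pq.1 pq.2 (fun _ => c)

/-- Linear part of `z⁽¹⁾ ↦ Bmat`. -/
noncomputable def dB (t : ℝ) (p : Arg n m d) (y1 : Tens n m 1) (δ : TensZ n m d 1)
    (b : Fin d) : Fin n → Fin n → ℝ :=
  fun i c => ∑ pq : Fin m × Fin d,
    sz σ t p (eZ pq.1 pq.2) i b * GiL σ t p y1 δ pq.1 pq.2 (fun _ => c)

lemma Amat_add (t : ℝ) (p : Arg n m d) (y1 : Tens n m 1) (z δ : TensZ n m d 1) :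
    Amat μ σ t p y1 (z + δ)
      = fun i c => Amat μ σ t p y1 z i c + dA μ σ t p y1 δ i c := by
  funext i c
  simp only [Amat, dA, h1_add σ t p y1 z δ, mul_add, Finset.sum_add_distrib]
  ring

lemma Bmat_add (t : ℝ) (p : Arg n m d) (y1 : Tens n m 1) (z δ : TensZ n m d 1)
    (b : Fin d) :
    Bmat σ t p y1 (z + δ) b
      = fun i c => Bmat σ t p y1 z b i c + dB σ t p y1 δ b i c := by
  funext i c
  simp only [Bmat, dB, h1_add σ t p y1 z δ, mul_add, Finset.sum_add_distrib]
  ring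

lemma snoc_zero_fun {α : Type*} (c' : Fin 0 → α) (j : α) :
    (Fin.snoc c' j : Fin 1 → α) = fun _ => j := by
  funext x
  have hx : x = Fin.last 0 := Fin.ext (by omega)
  rw [hx, Fin.snoc_last]

/-- `δ ↦ dA δ j c0` as a CLM. -/
noncomputable def dAL (t : ℝ) (p : Arg n m d) (y1 : Tens n m 1) (j c0 : Fin n) :
    TensZ n m d 1 →L[ℝ] ℝ :=
  ∑ pq : Fin m × Fin d,
    mz μ t p (eZ pq.1 pq.2) j • ((evZ pq.1 pq.2 (fun _ => c0)).comp (GiL σ t p y1))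

lemma dAL_apply (t : ℝ) (p : Arg n m d) (y1 : Tens n m 1) (j c0 : Fin n)
    (δ : TensZ n m d 1) : dAL μ σ t p y1 j c0 δ = dA μ σ t p y1 δ j c0 := by
  simp [dAL, dA]

/-- `δ ↦ dB δ b j c0` as a CLM. -/
noncomputable def dBL (t : ℝ) (p : Arg n m d) (y1 : Tens n m 1) (b : Fin d)
    (j c0 : Fin n) : TensZ n m d 1 →L[ℝ] ℝ :=
  ∑ pq : Fin m × Fin d,
    sz σ t p (eZ pq.1 pq.2) j b • ((evZ pq.1 pq.2 (fun _ => c0)).comp (GiL σ t p y1))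

lemma dBL_apply (t : ℝ) (p : Arg n m d) (y1 : Tens n m 1) (b : Fin d) (j c0 : Fin n)
    (δ : TensZ n m d 1) : dBL σ t p y1 b j c0 δ = dB σ t p y1 δ b j c0 := by
  simp [dBL, dB]

/-- `δ ↦ mulRight y1 (dA δ)` as a CLM. -/
noncomputable def TAL (t : ℝ) (p : Arg n m d) (y1 : Tens n m 1) :
    TensZ n m d 1 →L[ℝ] Tens n m 1 :=
  ContinuousLinearMap.pi fun a => ContinuousLinearMap.pi fun c =>
    ∑ j, mat1 y1 a j • dAL μ σ t p y1 j (c (Fin.last 0))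

lemma TAL_apply (t : ℝ) (p : Arg n m d) (y1 : Tens n m 1) (δ : TensZ n m d 1) :
    TAL μ σ t p y1 δ = mulRight y1 (dA μ σ t p y1 δ) := by
  funext a c
  show (∑ j, mat1 y1 a j • dAL μ σ t p y1 j (c (Fin.last 0))) δ = _
  simp only [mulRight, ContinuousLinearMap.sum_apply, ContinuousLinearMap.smul_apply,
    dAL_apply, smul_eq_mul, snoc_zero_fun]
  exact Finset.sum_congr rfl fun j _ => by rw [mat1]; rfl

/-- `δ ↦ ∑ b, mulRight (u ·b·) (dB δ b)` as a CLM in `δ`. -/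
noncomputable def quadOutL (t : ℝ) (p : Arg n m d) (y1 : Tens n m 1)
    (u : TensZ n m d 1) : TensZ n m d 1 →L[ℝ] Tens n m 1 :=
  ContinuousLinearMap.pi fun a => ContinuousLinearMap.pi fun c =>
    ∑ b, ∑ j, u a b (Fin.snoc (Fin.init c) j) • dBL σ t p y1 b j (c (Fin.last 0))

lemma quadOutL_apply_raw (t : ℝ) (p : Arg n m d) (y1 : Tens n m 1)
    (u δ : TensZ n m d 1) (a : Fin m) (c : Fin 1 → Fin n) :
    quadOutL σ t p y1 u δ a c
      = ∑ b, ∑ j, u a b (Fin.snoc (Fin.init c) j) * dB σ t p y1 δ b j (c (Fin.last 0)) := by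
  show (∑ b, ∑ j, u a b (Fin.snoc (Fin.init c) j) • dBL σ t p y1 b j (c (Fin.last 0))) δ = _
  simp [dBL_apply]

lemma quadOutL_apply (t : ℝ) (p : Arg n m d) (y1 : Tens n m 1) (u δ : TensZ n m d 1) :
    quadOutL σ t p y1 u δ
      = ∑ b, mulRight (fun a c => u a b c) (dB σ t p y1 δ b) := by
  funext a c
  rw [quadOutL_apply_raw]
  simp [mulRight, Finset.sum_apply]

end Aux2
section Aux3

variable (μ : ℝ → Arg n m d → (Fin n → ℝ)) (σ : ℝ → Arg n m d → Sig n d)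

lemma frobS_eq_zero {s : Sig n d} (h : frobS s ≤ 0) : s = 0 := by
  have h0 : frobS s = 0 := le_antisymm h (Real.sqrt_nonneg _)
  have hsum : ∑ i, ∑ j, (s i j) ^ 2 = 0 := by
    have hnn : 0 ≤ ∑ i, ∑ j, (s i j) ^ 2 :=
      Finset.sum_nonneg fun i _ => Finset.sum_nonneg fun j _ => sq_nonneg _
    have h2 := Real.sqrt_eq_zero'.mp h0
    linarith
  funext i j
  have hi := (Finset.sum_eq_zero_iff_of_nonneg
    (fun i _ => Finset.sum_nonneg fun j _ => sq_nonneg (s i j))).mp hsum i (Finset.mem_univ i)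
  have hj := (Finset.sum_eq_zero_iff_of_nonneg
    (fun j _ => sq_nonneg (s i j))).mp hi j (Finset.mem_univ j)
  have := pow_eq_zero_iff (n := 2) (by norm_num) |>.mp hj
  simpa using this

lemma sz_eq_zero {k : ℕ} {T Lz : ℝ} {f : ℝ → Arg n m d → Tens n m 0}
    (hk : 1 ≤ k) (hM : MLLC n m d k T μ σ f Lz) (hLz : Lz = 0)
    {t : ℝ} (ht : t ∈ Set.Icc (0:ℝ) T) (p : Arg n m d) (ζ : TensZ n m d 0) :
    sz σ t p ζ = 0 := by
  have hdiff : DifferentiableAt ℝ (σ t) p := by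
    refine ((hM.smooth_sigma t ht).differentiable ?_).differentiableAt
    exact_mod_cast (by omega : k ≠ 0)
  set v : Arg n m d := (0, 0, ζ) with hv
  have hline : ∀ u : ℝ, σ t (p + u • v) = σ t p := by
    intro u
    have h1 : p + u • v = (p.1, p.2.1, p.2.2 + u • ζ) := by
      refine Prod.ext ?_ (Prod.ext ?_ ?_) <;> simp [hv]
    have hle := hM.lz_lipschitz t ht p.1 p.2.1 (p.2.2 + u • ζ) p.2.2
    rw [hLz, zero_mul] at hle
    have hzero : σ t (p.1, p.2.1, p.2.2 + u • ζ) - σ t (p.1, p.2.1, p.2.2) = 0 :=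
      frobS_eq_zero hle
    have := sub_eq_zero.mp hzero
    rw [h1, this]
  have hkey : HasDerivAt (fun u : ℝ => σ t (p + u • v)) (fderiv ℝ (σ t) p v) 0 := by
    have h1 : HasDerivAt (fun u : ℝ => p + u • v) v 0 := by
      simpa using ((hasDerivAt_id (0:ℝ)).smul_const v).const_add p
    have h2 : HasFDerivAt (σ t) (fderiv ℝ (σ t) p) ((fun u : ℝ => p + u • v) 0) := by
      simpa using hdiff.hasFDerivAt
    exact h2.comp_hasDerivAt 0 h1
  have hconst : HasDerivAt (fun u : ℝ => σ t (p + u • v)) 0 0 := by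
    have he : (fun u : ℝ => σ t (p + u • v)) = fun _ => σ t p := funext hline
    rw [he]; exact hasDerivAt_const _ _
  have := hkey.unique hconst
  exact this

lemma Bmat_indep (t : ℝ) (p : Arg n m d) (y1 : Tens n m 1) (z1 z1' : TensZ n m d 1)
    (hsz : ∀ ζ : TensZ n m d 0, sz σ t p ζ = 0) (b : Fin d) :
    Bmat σ t p y1 z1 b = Bmat σ t p y1 z1' b := by
  funext i c
  simp [Bmat, hsz]

lemma quadOutL_indep (t : ℝ) (p : Arg n m d) (y1 : Tens n m 1) (z1 z1' : TensZ n m d 1)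
    (hsz : ∀ ζ : TensZ n m d 0, sz σ t p ζ = 0) :
    quadOutL σ t p y1 z1 = quadOutL σ t p y1 z1' := by
  ext δ a c
  rw [quadOutL_apply_raw, quadOutL_apply_raw]
  simp [dB, hsz]

end Aux3
section Aux4

variable (μ : ℝ → Arg n m d → (Fin n → ℝ)) (σ : ℝ → Arg n m d → Sig n d)

lemma phiStep_base_repr (t : ℝ) (D : EE n m d 0 →L[ℝ] Tens n m 0) (x : Fin n → ℝ)
    (Y : (j : Fin 2) → Tens n m j) (Z : (j : Fin 2) → TensZ n m d j) :
    phiStep μ σ t D x Y Z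
      = (appX (Dx D)
          + (appY (Dyp D ⟨0, by omega⟩) (Y ⟨1, by omega⟩)
             + appZ (Dzp D ⟨0, by omega⟩)
                 (h1 σ t (x, Y ⟨0, by omega⟩, Z ⟨0, by omega⟩) (Y ⟨1, by omega⟩)
                   (Z ⟨1, by omega⟩))))
        - mulRight (Y ⟨1, by omega⟩)
            (Amat μ σ t (x, Y ⟨0, by omega⟩, Z ⟨0, by omega⟩) (Y ⟨1, by omega⟩)
              (Z ⟨1, by omega⟩))
        - ∑ b, mulRight (fun a c => Z ⟨1, by omega⟩ a b c)
            (Bmat σ t (x, Y ⟨0, by omega⟩, Z ⟨0, by omega⟩) (Y ⟨1, by omega⟩)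
              (Z ⟨1, by omega⟩) b) := by
  simp only [phiStep, Fin.sum_univ_succ, Fin.sum_univ_zero, add_zero]
  rfl

end Aux4

section Aux5

variable (μ : ℝ → Arg n m d → (Fin n → ℝ)) (σ : ℝ → Arg n m d → Sig n d)

lemma Dzp_add {i : ℕ} (D : EE n m d i →L[ℝ] Tens n m i) (j : Fin (i + 1))
    (u v : TensZ n m d j) : Dzp D j (u + v) = Dzp D j u + Dzp D j v := by
  simp only [Dzp, Pi.single_add]
  have h : ((0 : Fin n → ℝ), (0 : (jj : Fin (i+1)) → Tens n m jj),
      Pi.single j u + Pi.single j v)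
      = (((0 : Fin n → ℝ), (0 : (jj : Fin (i+1)) → Tens n m jj), Pi.single j u)
        + ((0 : Fin n → ℝ), (0 : (jj : Fin (i+1)) → Tens n m jj), Pi.single j v)
          : EE n m d i) := by
    simp [Prod.ext_iff]
  rw [h, map_add]

lemma appZ_Dzp_add {i : ℕ} (D : EE n m d i →L[ℝ] Tens n m i) (j : Fin (i + 1))
    (u v : TensZ n m d (j + 1)) :
    appZ (Dzp D j) (u + v) = appZ (Dzp D j) u + appZ (Dzp D j) v := by
  funext a c
  have h : (fun a' b' c' => (u + v) a' b' (Fin.snoc c' (c (Fin.last i))))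
      = (fun a' b' c' => u a' b' (Fin.snoc c' (c (Fin.last i))))
        + (fun a' b' c' => v a' b' (Fin.snoc c' (c (Fin.last i)))) := rfl
  show Dzp D j (fun a' b' c' => (u + v) a' b' (Fin.snoc c' (c (Fin.last i)))) a (Fin.init c) = _
  rw [h, Dzp_add]
  rfl

lemma mulRight_zero_slice {k : ℕ} (b : Fin d) (A : Fin n → Fin n → ℝ) :
    mulRight (fun a c => (0 : TensZ n m d (k + 1)) a b c) A = 0 := by
  funext a c
  simp [mulRight]

lemma hK_split (t : ℝ) (p : Arg n m d) (y1 : Tens n m 1) (z1 : TensZ n m d 1)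
    {k : ℕ} (yk : Tens n m (k + 1)) (u : TensZ n m d (k + 1)) :
    hK σ t p y1 z1 yk u = u + hK σ t p y1 z1 yk 0 := by
  funext a b c
  show _ = u a b c + hK σ t p y1 z1 yk 0 a b c
  simp [hK]

lemma phiStep_step_repr (l : ℕ) (t : ℝ) (D : EE n m d (l + 1) →L[ℝ] Tens n m (l + 1))
    (x : Fin n → ℝ) (Y : (j : Fin (l + 1 + 2)) → Tens n m j)
    (Z : (j : Fin (l + 1 + 2)) → TensZ n m d j) :
    phiStep μ σ t D x Y Z
      = (appX (Dx D)
          + (∑ j : Fin (l + 1),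
              (appY (Dyp D j.castSucc) (Y j.castSucc.succ)
                + appZ (Dzp D j.castSucc)
                    (hGen σ t (x, Y ⟨0, by omega⟩, Z ⟨0, by omega⟩)
                      (Y ⟨1, by omega⟩) (Z ⟨1, by omega⟩)
                      (Y j.castSucc.succ) (Z j.castSucc.succ)))
            + (appY (Dyp D (Fin.last (l + 1))) (Y (Fin.last (l + 1)).succ)
                + appZ (Dzp D (Fin.last (l + 1)))
                    (hK σ t (x, Y ⟨0, by omega⟩, Z ⟨0, by omega⟩)
                      (Y ⟨1, by omega⟩) (Z ⟨1, by omega⟩)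
                      (Y (Fin.last (l + 1)).succ) (Z (Fin.last (l + 1)).succ)))))
        - mulRight (Y (Fin.last (l + 1 + 1)))
            (Amat μ σ t (x, Y ⟨0, by omega⟩, Z ⟨0, by omega⟩)
              (Y ⟨1, by omega⟩) (Z ⟨1, by omega⟩))
        - ∑ b, mulRight (fun a c => Z (Fin.last (l + 1 + 1)) a b c)
            (Bmat σ t (x, Y ⟨0, by omega⟩, Z ⟨0, by omega⟩)
              (Y ⟨1, by omega⟩) (Z ⟨1, by omega⟩) b) := by
  simp only [phiStep, Fin.sum_univ_castSucc]
  rfl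

end Aux5
section Aux6

variable (μ : ℝ → Arg n m d → (Fin n → ℝ)) (σ : ℝ → Arg n m d → Sig n d)

lemma phiStep_update (l : ℕ) (t : ℝ) (D : EE n m d (l + 1) →L[ℝ] Tens n m (l + 1))
    (x : Fin n → ℝ) (Y : (j : Fin (l + 1 + 2)) → Tens n m j)
    (Z : (j : Fin (l + 1 + 2)) → TensZ n m d j) (w : TensZ n m d (l + 1 + 1)) :
    phiStep μ σ t D x Y (Function.update Z (Fin.last (l + 1 + 1)) w)
      = phiStep μ σ t D x Y (Function.update Z (Fin.last (l + 1 + 1)) 0)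
        + (appZ (Dzp D (Fin.last (l + 1))) w
           - ∑ b, mulRight (fun a c => w a b c)
               (Bmat σ t (x, Y ⟨0, by omega⟩, Z ⟨0, by omega⟩)
                 (Y ⟨1, by omega⟩) (Z ⟨1, by omega⟩) b)) := by
  have hne0 : (⟨0, by omega⟩ : Fin (l + 1 + 2)) ≠ Fin.last (l + 1 + 1) := by
    intro h
    have := congrArg Fin.val h
    simp [Fin.last] at this
  have hne1 : (⟨1, by omega⟩ : Fin (l + 1 + 2)) ≠ Fin.last (l + 1 + 1) := by
    intro h
    have := congrArg Fin.val h
    simp [Fin.last] at this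
  have hnej : ∀ j : Fin (l + 1), (j.castSucc.succ : Fin (l + 1 + 2)) ≠ Fin.last (l + 1 + 1) := by
    intro j h
    have := congrArg Fin.val h
    simp [Fin.last] at this
    omega
  rw [phiStep_step_repr, phiStep_step_repr]
  simp only [Fin.succ_last, Function.update_self, Function.update_of_ne hne0,
    Function.update_of_ne hne1, Function.update_of_ne (hnej _)]
  rw [hK_split σ t _ _ _ _ w]
  rw [appZ_Dzp_add]
  simp only [mulRight_zero_slice, Finset.sum_const_zero, sub_zero]
  abel

end Aux6
section Aux7

variable (μ : ℝ → Arg n m d → (Fin n → ℝ)) (σ : ℝ → Arg n m d → Sig n d)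

lemma mulRight_addA {k : ℕ} (y : Tens n m (k + 1)) (A A' : Fin n → Fin n → ℝ) :
    mulRight y (A + A') = mulRight y A + mulRight y A' := by
  funext a c
  simp [mulRight, mul_add, Finset.sum_add_distrib]

lemma mulRight_addY {k : ℕ} (y y' : Tens n m (k + 1)) (A : Fin n → Fin n → ℝ) :
    mulRight (y + y') A = mulRight y A + mulRight y' A := by
  funext a c
  simp [mulRight, add_mul, Finset.sum_add_distrib]

lemma mulRight_slice_add {k : ℕ} (u v : TensZ n m d (k + 1)) (b : Fin d)
    (A : Fin n → Fin n → ℝ) :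
    mulRight (fun a c => (u + v) a b c) A
      = mulRight (fun a c => u a b c) A + mulRight (fun a c => v a b c) A :=
  mulRight_addY (fun a c => u a b c) (fun a c => v a b c) A

lemma h1_add' (t : ℝ) (p : Arg n m d) (y1 : Tens n m 1) (z δ : TensZ n m d 1) :
    h1 σ t p y1 (z + δ) = h1 σ t p y1 z + GiL σ t p y1 δ :=
  h1_add σ t p y1 z δ

lemma Amat_add' (t : ℝ) (p : Arg n m d) (y1 : Tens n m 1) (z δ : TensZ n m d 1) :
    Amat μ σ t p y1 (z + δ) = Amat μ σ t p y1 z + dA μ σ t p y1 δ :=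
  Amat_add μ σ t p y1 z δ

lemma Bmat_add' (t : ℝ) (p : Arg n m d) (y1 : Tens n m 1) (z δ : TensZ n m d 1)
    (b : Fin d) :
    Bmat σ t p y1 (z + δ) b = Bmat σ t p y1 z b + dB σ t p y1 δ b :=
  Bmat_add σ t p y1 z δ b

lemma DzpL_coe {i : ℕ} (D : EE n m d i →L[ℝ] Tens n m i) (j : Fin (i + 1)) :
    ⇑(DzpL D j) = Dzp D j :=
  funext fun w => DzpL_apply D j w

/-- The bilinear map underlying the quadratic part of `φ⁽¹⁾`, as a CLM into CLMs. -/
noncomputable def BilL (t : ℝ) (p : Arg n m d) (y1 : Tens n m 1) :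
    TensZ n m d 1 →L[ℝ] TensZ n m d 1 →L[ℝ] Tens n m 1 :=
  LinearMap.toContinuousLinearMap
    { toFun := fun u => quadOutL σ t p y1 u
      map_add' := by
        intro u v
        ext δ a c
        show quadOutL σ t p y1 (u + v) δ a c
          = (quadOutL σ t p y1 u + quadOutL σ t p y1 v) δ a c
        rw [ContinuousLinearMap.add_apply, Pi.add_apply, Pi.add_apply,
          quadOutL_apply_raw, quadOutL_apply_raw, quadOutL_apply_raw]
        simp [Pi.add_apply, add_mul, Finset.sum_add_distrib]
      map_smul' := by
        intro r u
        ext δ a c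
        show quadOutL σ t p y1 (r • u) δ a c = (r • quadOutL σ t p y1 u) δ a c
        rw [ContinuousLinearMap.smul_apply, Pi.smul_apply, Pi.smul_apply,
          quadOutL_apply_raw, quadOutL_apply_raw]
        simp [Finset.mul_sum, mul_assoc] }

lemma BilL_apply (t : ℝ) (p : Arg n m d) (y1 : Tens n m 1) (u : TensZ n m d 1) :
    BilL σ t p y1 u = quadOutL σ t p y1 u := rfl

/-- The derivative of `φ⁽¹⁾` in `z⁽¹⁾`, as a CLM. -/
noncomputable def baseDL (t : ℝ) (p : Arg n m d) (y1 : Tens n m 1) (z1 : TensZ n m d 1)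
    (D : EE n m d 0 →L[ℝ] Tens n m 0) : TensZ n m d 1 →L[ℝ] Tens n m 1 :=
  (appZL (DzpL D ⟨0, by omega⟩)).comp (GiL σ t p y1)
    - TAL μ σ t p y1
    - quadL (fun b => Bmat σ t p y1 z1 b)
    - quadOutL σ t p y1 z1

lemma baseDL_apply (t : ℝ) (p : Arg n m d) (y1 : Tens n m 1) (z1 : TensZ n m d 1)
    (D : EE n m d 0 →L[ℝ] Tens n m 0) (δ : TensZ n m d 1) :
    baseDL μ σ t p y1 z1 D δ
      = appZ (Dzp D ⟨0, by omega⟩) (GiL σ t p y1 δ)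
        - mulRight y1 (dA μ σ t p y1 δ)
        - ∑ b, mulRight (fun a c => δ a b c) (Bmat σ t p y1 z1 b)
        - ∑ b, mulRight (fun a c => z1 a b c) (dB σ t p y1 δ b) := by
  simp only [baseDL, ContinuousLinearMap.sub_apply, ContinuousLinearMap.comp_apply,
    appZL_apply, DzpL_coe, TAL_apply, quadL_apply, quadOutL_apply]

lemma base_repr_shift (t : ℝ) (p : Arg n m d) (y1 : Tens n m 1) (z1 : TensZ n m d 1)
    (D : EE n m d 0 →L[ℝ] Tens n m 0) (C : Tens n m 1) (δ : TensZ n m d 1) :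
    (C + appZ (Dzp D ⟨0, by omega⟩) (h1 σ t p y1 (z1 + δ))
      - mulRight y1 (Amat μ σ t p y1 (z1 + δ))
      - ∑ b, mulRight (fun a c => (z1 + δ) a b c) (Bmat σ t p y1 (z1 + δ) b))
    = (C + appZ (Dzp D ⟨0, by omega⟩) (h1 σ t p y1 z1)
        - mulRight y1 (Amat μ σ t p y1 z1)
        - ∑ b, mulRight (fun a c => z1 a b c) (Bmat σ t p y1 z1 b))
      + baseDL μ σ t p y1 z1 D δ
      - quadOutL σ t p y1 δ δ := by
  rw [h1_add', appZ_Dzp_add, Amat_add', mulRight_addA, baseDL_apply, quadOutL_apply]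
  simp only [Bmat_add' σ t p y1 z1 δ, mulRight_addA, mulRight_slice_add,
    Finset.sum_add_distrib]
  abel

lemma base_hasFDerivAt (t : ℝ) (p : Arg n m d) (y1 : Tens n m 1) (z1 : TensZ n m d 1)
    (D : EE n m d 0 →L[ℝ] Tens n m 0) (C : Tens n m 1) :
    HasFDerivAt (fun w : TensZ n m d 1 =>
        C + appZ (Dzp D ⟨0, by omega⟩) (h1 σ t p y1 w)
          - mulRight y1 (Amat μ σ t p y1 w)
          - ∑ b, mulRight (fun a c => w a b c) (Bmat σ t p y1 w b))
      (baseDL μ σ t p y1 z1 D) z1 := by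
  have hfun : (fun w : TensZ n m d 1 =>
        C + appZ (Dzp D ⟨0, by omega⟩) (h1 σ t p y1 w)
          - mulRight y1 (Amat μ σ t p y1 w)
          - ∑ b, mulRight (fun a c => w a b c) (Bmat σ t p y1 w b))
      = fun w =>
          (C + appZ (Dzp D ⟨0, by omega⟩) (h1 σ t p y1 z1)
            - mulRight y1 (Amat μ σ t p y1 z1)
            - ∑ b, mulRight (fun a c => z1 a b c) (Bmat σ t p y1 z1 b))
          + baseDL μ σ t p y1 z1 D (w - z1)
          - BilL σ t p y1 (w - z1) (w - z1) := by
    funext w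
    have h := base_repr_shift μ σ t p y1 z1 D C (w - z1)
    rw [add_sub_cancel] at h
    rw [h, BilL_apply]
  rw [hfun]
  have hlin : HasFDerivAt
      (fun w : TensZ n m d 1 =>
        (C + appZ (Dzp D ⟨0, by omega⟩) (h1 σ t p y1 z1)
          - mulRight y1 (Amat μ σ t p y1 z1)
          - ∑ b, mulRight (fun a c => z1 a b c) (Bmat σ t p y1 z1 b))
        + baseDL μ σ t p y1 z1 D (w - z1))
      (baseDL μ σ t p y1 z1 D) z1 := by
    have h1' : HasFDerivAt (fun w : TensZ n m d 1 => baseDL μ σ t p y1 z1 D (w - z1))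
        (baseDL μ σ t p y1 z1 D) z1 := by
      have h2' : (fun w : TensZ n m d 1 => baseDL μ σ t p y1 z1 D (w - z1))
          = fun w => baseDL μ σ t p y1 z1 D w - baseDL μ σ t p y1 z1 D z1 := by
        funext w; rw [map_sub]
      rw [h2']
      exact (baseDL μ σ t p y1 z1 D).hasFDerivAt.sub_const _
    exact h1'.const_add _
  have hquad : HasFDerivAt
      (fun w : TensZ n m d 1 => BilL σ t p y1 (w - z1) (w - z1))
      (0 : TensZ n m d 1 →L[ℝ] Tens n m 1) z1 := by
    have hbb := (BilL σ t p y1).isBoundedBilinearMap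
    have hdiag : HasFDerivAt (fun w : TensZ n m d 1 => (w - z1, w - z1))
        ((ContinuousLinearMap.id ℝ (TensZ n m d 1)).prod
          (ContinuousLinearMap.id ℝ (TensZ n m d 1))) z1 :=
      ((hasFDerivAt_id z1).sub_const z1).prodMk ((hasFDerivAt_id z1).sub_const z1)
    have hval : (fun w : TensZ n m d 1 => (w - z1, w - z1)) z1 = (0, 0) := by
      simp
    have hb2 : HasFDerivAt (fun q : TensZ n m d 1 × TensZ n m d 1 => BilL σ t p y1 q.1 q.2)
        (hbb.deriv (0, 0)) ((fun w : TensZ n m d 1 => (w - z1, w - z1)) z1) := by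
      rw [hval]; exact hbb.hasFDerivAt (0, 0)
    have hcomp := hb2.comp z1 hdiag
    have hzero : (hbb.deriv (0, 0)).comp
        ((ContinuousLinearMap.id ℝ (TensZ n m d 1)).prod
          (ContinuousLinearMap.id ℝ (TensZ n m d 1)))
        = (0 : TensZ n m d 1 →L[ℝ] Tens n m 1) := by
      ext u
      simp [hbb.deriv_apply]
    rw [hzero] at hcomp
    exact hcomp
  have := hlin.sub hquad
  simpa using this
end Aux7
section AuxIndep

variable (μ : ℝ → Arg n m d → (Fin n → ℝ)) (σ : ℝ → Arg n m d → Sig n d)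

lemma baseDL_indep (t : ℝ) (p : Arg n m d) (y1 : Tens n m 1) (z1 z1' : TensZ n m d 1)
    (D : EE n m d 0 →L[ℝ] Tens n m 0) (hsz : ∀ ζ : TensZ n m d 0, sz σ t p ζ = 0) :
    baseDL μ σ t p y1 z1 D = baseDL μ σ t p y1 z1' D := by
  have hB : (fun b => Bmat σ t p y1 z1 b) = fun b => Bmat σ t p y1 z1' b :=
    funext fun b => Bmat_indep σ t p y1 z1 z1' hsz b
  unfold baseDL
  rw [hB, quadOutL_indep σ t p y1 z1 z1' hsz]

end AuxIndep
/-- **Proposition 6.2.**  Assume `(μ,σ,f)` satisfies `(k-MLLC)` for `k ≥ 1`.  Then the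
partial derivative `φ⁽ᵏ⁾_{z⁽ᵏ⁾}` can be expressed as a function of `θ₁` only: there is
a function `g` on `Θ₁` with values in the linear maps `ℝ^{(m×d)×_k n} → ℝ^{m×_k n}`
such that at every `θ_k ∈ Θ_k` the derivative of `φ⁽ᵏ⁾` with respect to `z⁽ᵏ⁾` equals
`g(θ₁)`.  If moreover `L_{σ,z} = 0`, then `g` is merely a function of
`θ_{1−} = (t,x,y⁽⁰⁾,z⁽⁰⁾,y⁽¹⁾)`, i.e. it does not depend on `z⁽¹⁾` either. -/
theorem phi_deriv_zk_function_of_theta1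
    {n m d : ℕ} {T : ℝ} (hT : 0 < T) (k : ℕ) (hk : 1 ≤ k)
    (μ : ℝ → Arg n m d → (Fin n → ℝ)) (σ : ℝ → Arg n m d → Sig n d)
    (f : ℝ → Arg n m d → Tens n m 0) (Lz : ℝ)
    (hMLLC : MLLC n m d k T μ σ f Lz)
    (φ : (i : ℕ) → PhiFun n m d i)
    (hchain : IsPhiChain n m d k T Lz μ σ f φ) :
    ∃ g : ℝ → (Fin n → ℝ) → Tens n m 0 → TensZ n m d 0 → Tens n m 1 → TensZ n m d 1 →
        (TensZ n m d k →L[ℝ] Tens n m k),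
      (∀ t ∈ Set.Icc (0:ℝ) T, ∀ (x : Fin n → ℝ)
        (Y : (j : Fin (k + 1)) → Tens n m j) (Z : (j : Fin (k + 1)) → TensZ n m d j),
        Lz * opN (Y ⟨1, Nat.succ_le_succ hk⟩) < 1 →
        HasFDerivAt
          (fun w : TensZ n m d k => φ k t (x, Y, Function.update Z (Fin.last k) w))
          (g t x (Y ⟨0, by omega⟩) (Z ⟨0, by omega⟩)
            (Y ⟨1, Nat.succ_le_succ hk⟩) (Z ⟨1, Nat.succ_le_succ hk⟩))
          (Z (Fin.last k))) ∧
      (Lz = 0 → ∀ t x y0 z0 y1 z1 z1', g t x y0 z0 y1 z1 = g t x y0 z0 y1 z1') := by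
  classical
  have H : ∀ i (hi : 1 ≤ i), i ≤ k →
      ∃ g : ℝ → (Fin n → ℝ) → Tens n m 0 → TensZ n m d 0 → Tens n m 1 → TensZ n m d 1 →
          (TensZ n m d i →L[ℝ] Tens n m i),
        (∀ t ∈ Set.Icc (0:ℝ) T, ∀ (x : Fin n → ℝ)
          (Y : (j : Fin (i + 1)) → Tens n m j) (Z : (j : Fin (i + 1)) → TensZ n m d j),
          Lz * opN (Y ⟨1, Nat.succ_lt_succ hi⟩) < 1 →
          HasFDerivAt
            (fun w : TensZ n m d i => φ i t (x, Y, Function.update Z (Fin.last i) w))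
            (g t x (Y ⟨0, by omega⟩) (Z ⟨0, by omega⟩)
              (Y ⟨1, Nat.succ_lt_succ hi⟩) (Z ⟨1, Nat.succ_lt_succ hi⟩))
            (Z (Fin.last i))) ∧
        (Lz = 0 → ∀ t x y0 z0 y1 z1 z1', g t x y0 z0 y1 z1 = g t x y0 z0 y1 z1') := by
    intro i hi
    induction i, hi using Nat.le_induction with
    | base =>
      intro hik
      refine ⟨fun t x y0 z0 y1 z1 =>
        if ht : t ∈ Set.Icc (0:ℝ) T then
          baseDL μ σ t (x, y0, z0) y1 z1
            (fderiv ℝ (φ 0 t) ((x, Fin.cons y0 (fun i => i.elim0), Fin.cons z0 (fun i => i.elim0))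
              : EE n m d 0))
        else 0, ?_, ?_⟩
      · intro t ht x Y Z hop
        beta_reduce
        rw [dif_pos ht]
        set y0 := Y ⟨0, by omega⟩ with hy0
        set z0 := Z ⟨0, by omega⟩ with hz0
        set y1 := Y ⟨1, by omega⟩ with hy1
        set Dcan := fderiv ℝ (φ 0 t)
          ((x, Fin.cons y0 (fun i => i.elim0), Fin.cons z0 (fun i => i.elim0)) : EE n m d 0) with hDcan
        have hne0 : (⟨0, by omega⟩ : Fin 2) ≠ Fin.last 1 := by simp [Fin.ext_iff]
        have hYc : (fun j : Fin 1 => Y j.castSucc) = Fin.cons y0 (fun i => i.elim0) := by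
          funext j
          have hj : j = 0 := Fin.ext (by omega)
          subst hj
          rw [Fin.cons_zero]
          rfl
        have hfeq : (fun w : TensZ n m d 1 => φ 1 t (x, Y, Function.update Z (Fin.last 1) w))
            = fun w => (appX (Dx Dcan) + appY (Dyp Dcan ⟨0, by omega⟩) (Y ⟨1, by omega⟩))
                + appZ (Dzp Dcan ⟨0, by omega⟩) (h1 σ t (x, y0, z0) y1 w)
                - mulRight y1 (Amat μ σ t (x, y0, z0) y1 w)
                - ∑ b, mulRight (fun a c => w a b c) (Bmat σ t (x, y0, z0) y1 w b) := by
          funext w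
          obtain ⟨Dw, hDw, heqw⟩ :=
            hchain.step 0 hik t ht x Y (Function.update Z (Fin.last 1) w) hop
          have hZc : (fun j : Fin 1 => Function.update Z (Fin.last 1) w j.castSucc)
              = Fin.cons z0 (fun i => i.elim0) := by
            funext j
            have hj : j = 0 := Fin.ext (by omega)
            subst hj
            rw [Fin.cons_zero]
            show Function.update Z (Fin.last 1) w ⟨0, by omega⟩ = z0
            rw [Function.update_of_ne hne0 _ _]
          rw [hYc, hZc] at hDw
          have hDweq : Dw = Dcan := (hDw.fderiv).symm
          rw [hDweq] at heqw
          rw [heqw, phiStep_base_repr]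
          have hu0 : Function.update Z (Fin.last 1) w ⟨0, by omega⟩ = Z ⟨0, by omega⟩ :=
            Function.update_of_ne hne0 _ _
          have hu1 : Function.update Z (Fin.last 1) w ⟨1, by omega⟩ = w :=
            Function.update_self (Fin.last 1) w Z
          rw [hu0, hu1]
          abel
        rw [hfeq]
        exact base_hasFDerivAt μ σ t (x, y0, z0) y1 (Z ⟨1, by omega⟩)
          Dcan _
      · intro hLz t x y0 z0 y1 z1 z1'
        by_cases ht : t ∈ Set.Icc (0:ℝ) T
        · beta_reduce
          rw [dif_pos ht, dif_pos ht]
          exact baseDL_indep μ σ t (x, y0, z0) y1 z1 z1' _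
            (fun ζ => sz_eq_zero μ σ hk hMLLC hLz ht (x, y0, z0) ζ)
        · beta_reduce
          rw [dif_neg ht, dif_neg ht]
    | succ i hi IH =>
      intro hik
      obtain ⟨l, rfl⟩ : ∃ l, i = l + 1 := ⟨i - 1, by omega⟩
      obtain ⟨gi, hgi1, hgi2⟩ := IH (by omega)
      refine ⟨fun t x y0 z0 y1 z1 =>
        if t ∈ Set.Icc (0:ℝ) T then
          appZL (gi t x y0 z0 y1 z1) - quadL (fun b => Bmat σ t (x, y0, z0) y1 z1 b)
        else 0, ?_, ?_⟩
      · intro t ht x Y Z hop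
        beta_reduce
        rw [if_pos ht]
        obtain ⟨D, hD, -⟩ := hchain.step (l + 1) hik t ht x Y Z hop
        set Yc := fun j : Fin (l + 2) => Y j.castSucc with hYc
        set Zc := fun j : Fin (l + 2) => Z j.castSucc with hZc
        have key : ∀ w, φ (l + 1 + 1) t (x, Y, Function.update Z (Fin.last (l + 1 + 1)) w)
            = phiStep μ σ t D x Y (Function.update Z (Fin.last (l + 1 + 1)) w) := by
          intro w
          obtain ⟨D', hD', heq'⟩ :=
            hchain.step (l + 1) hik t ht x Y (Function.update Z (Fin.last (l + 1 + 1)) w) hop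
          have hpt : (fun j : Fin (l + 2) =>
              Function.update Z (Fin.last (l + 1 + 1)) w j.castSucc) = Zc := by
            funext j
            exact Function.update_of_ne (Fin.castSucc_lt_last j).ne _ _
          rw [hpt] at hD'
          rw [show D' = D from hD'.unique hD] at heq'
          exact heq'
        -- identify Dzp D (last (l+1)) with gi
        have hAder : HasFDerivAt
            (fun u : TensZ n m d (l + 1) =>
              ((x, Yc, Function.update Zc (Fin.last (l + 1)) u) : EE n m d (l + 1)))
            (inZ (Fin.last (l + 1))) (Zc (Fin.last (l + 1))) := by
          have haff : (fun u : TensZ n m d (l + 1) =>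
              ((x, Yc, Function.update Zc (Fin.last (l + 1)) u) : EE n m d (l + 1)))
              = fun u => ((x, Yc, Function.update Zc (Fin.last (l + 1)) 0) : EE n m d (l + 1))
                  + inZ (Fin.last (l + 1)) u := by
            funext u
            rw [inZ_apply]
            refine Prod.ext ?_ (Prod.ext ?_ ?_)
            · show x = x + 0; rw [add_zero]
            · show Yc = Yc + 0; rw [add_zero]
            · show Function.update Zc (Fin.last (l + 1)) u
                = Function.update Zc (Fin.last (l + 1)) 0 + Pi.single (Fin.last (l + 1)) u
              funext j
              by_cases hj : j = Fin.last (l + 1)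
              · subst hj
                simp
              · simp [Function.update_of_ne hj, Pi.single_eq_of_ne hj]
          rw [haff]
          exact (inZ (Fin.last (l + 1))).hasFDerivAt.const_add _
        have hval : ((x, Yc, Function.update Zc (Fin.last (l + 1)) (Zc (Fin.last (l + 1))))
            : EE n m d (l + 1)) = (x, Yc, Zc) :=
          Prod.ext rfl (Prod.ext rfl (Function.update_eq_self _ _))
        have hD2 : HasFDerivAt (φ (l + 1) t) D
            ((x, Yc, Function.update Zc (Fin.last (l + 1)) (Zc (Fin.last (l + 1))))
              : EE n m d (l + 1)) := by
          rw [hval]; exact hD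
        have hcomp := hD2.comp (Zc (Fin.last (l + 1))) hAder
        have hIH := hgi1 t ht x Yc Zc hop
        have huniq : D.comp (inZ (Fin.last (l + 1)))
            = gi t x (Y ⟨0, by omega⟩) (Z ⟨0, by omega⟩)
                (Y ⟨1, by omega⟩)
                (Z ⟨1, by omega⟩) :=
          hcomp.unique hIH
        have hDzp : Dzp D (Fin.last (l + 1))
            = ⇑(gi t x (Y ⟨0, by omega⟩) (Z ⟨0, by omega⟩)
                (Y ⟨1, by omega⟩)
                (Z ⟨1, by omega⟩)) := by
          funext u
          have h2 := DFunLike.congr_fun huniq u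
          calc Dzp D (Fin.last (l + 1)) u
              = (D.comp (inZ (Fin.last (l + 1)))) u := by
                rw [ContinuousLinearMap.comp_apply, inZ_apply]
                rfl
            _ = _ := h2
        have hfeq : (fun w : TensZ n m d (l + 1 + 1) =>
            φ (l + 1 + 1) t (x, Y, Function.update Z (Fin.last (l + 1 + 1)) w))
            = fun w => phiStep μ σ t D x Y (Function.update Z (Fin.last (l + 1 + 1)) 0)
                + (appZL (gi t x (Y ⟨0, by omega⟩) (Z ⟨0, by omega⟩)
                      (Y ⟨1, by omega⟩) (Z ⟨1, by omega⟩))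
                    - quadL (fun b => Bmat σ t (x, Y ⟨0, by omega⟩, Z ⟨0, by omega⟩)
                        (Y ⟨1, by omega⟩) (Z ⟨1, by omega⟩) b) :
                    TensZ n m d (l + 1 + 1) →L[ℝ] Tens n m (l + 1 + 1)) w := by
          funext w
          rw [key w, phiStep_update μ σ l t D x Y Z w]
          congr 1
          rw [ContinuousLinearMap.sub_apply, appZL_apply, quadL_apply, hDzp]
        rw [hfeq]
        exact ContinuousLinearMap.hasFDerivAt _ |>.const_add _
      · intro hLz t x y0 z0 y1 z1 z1'
        by_cases ht : t ∈ Set.Icc (0:ℝ) T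
        · beta_reduce
          rw [if_pos ht, if_pos ht]
          have hsz : ∀ ζ : TensZ n m d 0, sz σ t (x, y0, z0) ζ = 0 :=
            fun ζ => sz_eq_zero μ σ hk hMLLC hLz ht (x, y0, z0) ζ
          rw [hgi2 hLz t x y0 z0 y1 z1 z1',
            show (fun b => Bmat σ t (x, y0, z0) y1 z1 b)
              = fun b => Bmat σ t (x, y0, z0) y1 z1' b from
              funext fun b => Bmat_indep σ t (x, y0, z0) y1 z1 z1' hsz b]
        · beta_reduce
          rw [if_neg ht, if_neg ht]
  obtain ⟨g, hg1, hg2⟩ := H k hk le_rfl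
  exact ⟨g, fun t ht x Y Z hop => hg1 t ht x Y Z hop, hg2⟩

end DecouplingFBSDE
end

section
/- Assume (μ,σ,f) satisfies (k-MLLC) for some k ∈ ℕ₀ and let λ > 0. Define transformed coefficients (μ̄,σ̄)(t,x,y,z) := λ·(μ,σ)(t,λ^{-1}x,y,z) and f̄(t,x,y,z) := f(t,λ^{-1}x,y,z), and let h̄⁽ⁱ⁾ and φ̄⁽ⁱ⁾ be defined from (μ̄,σ̄,f̄) by the same recursion as h⁽ⁱ⁾ and φ⁽ⁱ⁾ are defined from (μ,σ,f) (note L_{σ̄,z} = λ·L_{σ,z}). Then for all i ∈ {0,…,k} and all admissible arguments: h̄⁽ⁱ⁾(t,x,y⁽⁰⁾,z⁽⁰⁾,…,y⁽ⁱ⁾,z⁽ⁱ⁾) = λ^{−i}·h⁽ⁱ⁾(t,λ^{−1}x,λ⁰y⁽⁰⁾,λ⁰z⁽⁰⁾,…,λⁱy⁽ⁱ⁾,λⁱz⁽ⁱ⁾) (for i ≥ 1) and φ̄⁽ⁱ⁾(t,x,y⁽⁰⁾,z⁽⁰⁾,…,y⁽ⁱ⁾,z⁽ⁱ⁾) = λ^{−i}·φ⁽ⁱ⁾(t,λ^{−1}x,λ⁰y⁽⁰⁾,λ⁰z⁽⁰⁾,…,λⁱy⁽ⁱ⁾,λⁱz⁽ⁱ⁾);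 here (t,x,y⁽⁰⁾,z⁽⁰⁾,…,y⁽ⁱ⁾,z⁽ⁱ⁾) ranges over the domain Θ̄_i built from L_{σ̄,z}, and the scaled argument lies in Θ_i. -/
namespace DecouplingFBSDE

variable {n m d : ℕ}

/-!
Replacing `x` by `λ⁻¹x` multiplies each `x`-derivative by `λ⁻¹`, and the prefactor `λ` of
`μ̄, σ̄` multiplies every derivative by `λ`. Hence `σ̄_x = σ_x`, `σ̄_y = λσ_y`, `σ̄_z = λσ_z` (and
likewise for `μ̄`), and the identities for `h̄⁽ⁱ⁾` are pure algebra. For `φ̄⁽ⁱ⁾` one inducts on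
`i`: the identity for `φ̄⁽ⁱ⁾` holds on the open set of admissible arguments, so it may be
differentiated there; the derivative of `φ̄⁽ⁱ⁾` is `λ⁻ⁱ` times that of `φ⁽ⁱ⁾` composed with the
linear scaling `(x, y⁽ʲ⁾, z⁽ʲ⁾) ↦ (λ⁻¹x, λʲy⁽ʲ⁾, λʲz⁽ʲ⁾)`, and inserting it into the recursion
gives the identity for `φ̄⁽ⁱ⁺¹⁾`.
-/

theorem fderiv_const_smul_comp_clm {E F V : Type*} [NormedAddCommGroup E] [NormedSpace ℝ E]
    [NormedAddCommGroup F] [NormedSpace ℝ F] [NormedAddCommGroup V] [NormedSpace ℝ V]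
    (c : ℝ) (L : E →L[ℝ] F) {g : F → V} {p : E} (hg : DifferentiableAt ℝ g (L p)) :
    fderiv ℝ (fun q => c • g (L q)) p = c • (fderiv ℝ g (L p)).comp L :=
  ((hg.hasFDerivAt.comp p L.hasFDerivAt).const_smul c).fderiv

noncomputable def argScale (lam : ℝ) : Arg n m d →L[ℝ] Arg n m d :=
  (lam⁻¹ • ContinuousLinearMap.id ℝ (Fin n → ℝ)).prodMap (ContinuousLinearMap.id ℝ _)

@[simp]
theorem argScale_apply (lam : ℝ) (p : Arg n m d) :
    argScale lam p = (lam⁻¹ • p.1, p.2.1, p.2.2) := rfl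

section PartialDerivatives

variable {V : Type*} [NormedAddCommGroup V] [NormedSpace ℝ V] {lam : ℝ} {g g' : Arg n m d → V}
  {p : Arg n m d}

theorem fderiv_scaled_apply_x (hlam : lam ≠ 0) (hg' : g' = fun q => lam • g (argScale lam q))
    (hg : DifferentiableAt ℝ g (argScale lam p)) (v : Fin n → ℝ) :
    fderiv ℝ g' p (v, 0, 0) = fderiv ℝ g (argScale lam p) (v, 0, 0) := by
  have hv : argScale lam ((v, 0, 0) : Arg n m d) = lam⁻¹ • (v, 0, 0) := by simp
  rw [hg', fderiv_const_smul_comp_clm lam _ hg, smul_apply,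
    ContinuousLinearMap.comp_apply, hv, map_smul, smul_inv_smul₀ hlam]

theorem fderiv_scaled_apply_y (hg' : g' = fun q => lam • g (argScale lam q))
    (hg : DifferentiableAt ℝ g (argScale lam p)) (w : Tens n m 0) :
    fderiv ℝ g' p (0, w, 0) = lam • fderiv ℝ g (argScale lam p) (0, w, 0) := by
  rw [hg', fderiv_const_smul_comp_clm lam _ hg]
  simp

theorem fderiv_scaled_apply_z (hg' : g' = fun q => lam • g (argScale lam q))
    (hg : DifferentiableAt ℝ g (argScale lam p)) (ζ : TensZ n m d 0) :
    fderiv ℝ g' p (0, 0, ζ) = lam • fderiv ℝ g (argScale lam p) (0, 0, ζ) := by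
  rw [hg', fderiv_const_smul_comp_clm lam _ hg]
  simp

end PartialDerivatives

section CoefficientScaling

variable {lam t : ℝ} {σ σ' : ℝ → Arg n m d → Sig n d} {μ μ' : ℝ → Arg n m d → (Fin n → ℝ)}
  {p : Arg n m d}

theorem mat1_smul (c : ℝ) (v : Tens n m 1) : mat1 (c • v) = c • mat1 v := rfl

theorem mulRight_smul {k : ℕ} (c : ℝ) (y : Tens n m (k + 1)) (A : Fin n → Fin n → ℝ) :
    mulRight (c • y) A = c • mulRight y A := by
  funext a c'
  simp only [mulRight, Pi.smul_apply, smul_eq_mul, Finset.mul_sum, mul_assoc]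

theorem mulRight_slice_smul {k : ℕ} (c : ℝ) (z : TensZ n m d (k + 1)) (b : Fin d)
    (A : Fin n → Fin n → ℝ) :
    mulRight (fun a e => (c • z) a b e) A = c • mulRight (fun a e => z a b e) A :=
  mulRight_smul c (fun a e => z a b e) A

variable (hlam : lam ≠ 0) (hσ : σ' t = fun q => lam • σ t (argScale lam q))
  (hdσ : DifferentiableAt ℝ (σ t) (argScale lam p))
include hσ hdσ

theorem Gmat_scale (y1 : Tens n m 1) :
    Gmat σ' t p y1 = Gmat σ t (argScale lam p) (lam • y1) := by
  simp only [Gmat, sz, fderiv_scaled_apply_z hσ hdσ, mat1_smul, Matrix.smul_apply, Pi.smul_apply,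
    smul_eq_mul, mul_assoc, mul_left_comm (mat1 y1 _ _) lam]

include hlam in
theorem Rh_scale (y1 : Tens n m 1) (z1 : TensZ n m d 1) :
    Rh σ' t p y1 z1 = lam⁻¹ • Rh σ t (argScale lam p) (lam • y1) (lam • z1) := by
  funext a b c
  simp only [Rh, sx, sy, fderiv_scaled_apply_x hlam hσ hdσ, fderiv_scaled_apply_y hσ hdσ, mat1_smul,
    Matrix.smul_apply, Pi.smul_apply, smul_eq_mul, mul_add, Finset.mul_sum, Finset.sum_mul]
  field_simp
  simp only [mul_comm (mat1 y1 _ _) lam]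

include hlam

theorem h1_scale (y1 : Tens n m 1) (z1 : TensZ n m d 1) :
    h1 σ' t p y1 z1 = lam⁻¹ • h1 σ t (argScale lam p) (lam • y1) (lam • z1) := by
  funext a b c
  simp only [h1, Gmat_scale hσ hdσ, Rh_scale hlam hσ hdσ, Pi.smul_apply, smul_eq_mul,
    Finset.mul_sum, mul_left_comm lam⁻¹]

theorem Bmat_scale (y1 : Tens n m 1) (z1 : TensZ n m d 1) (b : Fin d) :
    Bmat σ' t p y1 z1 b = Bmat σ t (argScale lam p) (lam • y1) (lam • z1) b := by
  funext i c
  simp only [Bmat, sx, sy, sz, fderiv_scaled_apply_x hlam hσ hdσ, fderiv_scaled_apply_y hσ hdσ,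
    fderiv_scaled_apply_z hσ hdσ, h1_scale hlam hσ hdσ, mat1_smul, Matrix.smul_apply,
    Pi.smul_apply, smul_eq_mul, mul_assoc, mul_left_comm _ lam⁻¹,
    mul_left_comm _ lam (mat1 y1 _ _), inv_mul_cancel_left₀ hlam]

theorem Amat_scale (hμ : μ' t = fun q => lam • μ t (argScale lam q))
    (hdμ : DifferentiableAt ℝ (μ t) (argScale lam p)) (y1 : Tens n m 1) (z1 : TensZ n m d 1) :
    Amat μ' σ' t p y1 z1 = Amat μ σ t (argScale lam p) (lam • y1) (lam • z1) := by
  funext i c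
  simp only [Amat, mx, my, mz, fderiv_scaled_apply_x hlam hμ hdμ, fderiv_scaled_apply_y hμ hdμ,
    fderiv_scaled_apply_z hμ hdμ, h1_scale hlam hσ hdσ, mat1_smul, Matrix.smul_apply,
    Pi.smul_apply, smul_eq_mul, mul_assoc, mul_left_comm _ lam⁻¹,
    mul_left_comm _ lam (mat1 y1 _ _), inv_mul_cancel_left₀ hlam]

theorem hK_scale (y1 : Tens n m 1) (z1 : TensZ n m d 1) {K : ℕ} (yK : Tens n m (K + 1))
    (zK : TensZ n m d (K + 1)) :
    hK σ' t p y1 z1 yK zK = (lam ^ (K + 1))⁻¹ • hK σ t (argScale lam p) (lam • y1) (lam • z1)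
      (lam ^ (K + 1) • yK) (lam ^ (K + 1) • zK) := by
  funext a b c
  simp only [hK, Bmat_scale hlam hσ hdσ, mulRight_smul, Pi.smul_apply, smul_eq_mul, mul_add,
    inv_mul_cancel_left₀ (pow_ne_zero _ hlam)]

theorem hGen_scale (y1 : Tens n m 1) (z1 : TensZ n m d 1) {K : ℕ} (yK : Tens n m (K + 1))
    (zK : TensZ n m d (K + 1)) :
    hGen σ' t p y1 z1 yK zK = (lam ^ (K + 1))⁻¹ • hGen σ t (argScale lam p) (lam • y1) (lam • z1)
      (lam ^ (K + 1) • yK) (lam ^ (K + 1) • zK) := by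
  cases K with
  | zero => simpa only [hGen, zero_add, pow_one] using h1_scale hlam hσ hdσ yK zK
  | succ K => exact hK_scale hlam hσ hdσ y1 z1 yK zK

end CoefficientScaling

noncomputable def mat1CLM :
    Tens n m 1 →ₗ[ℝ] EuclideanSpace ℝ (Fin n) →L[ℝ] EuclideanSpace ℝ (Fin m) where
  toFun v := LinearMap.toContinuousLinearMap (Matrix.toEuclideanLin (mat1 v))
  map_add' v w := by simp only [← map_add]; rfl
  map_smul' c v := by simp only [← map_smul]; rfl

theorem opN_eq_norm_mat1CLM (v : Tens n m 1) : opN v = ‖mat1CLM v‖ := rfl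

theorem continuous_opN : Continuous (opN (n := n) (m := m)) :=
  mat1CLM.continuous_of_finiteDimensional.norm

theorem opN_smul (c : ℝ) (v : Tens n m 1) : opN (c • v) = |c| * opN v := by
  rw [opN_eq_norm_mat1CLM, opN_eq_norm_mat1CLM, map_smul, norm_smul, Real.norm_eq_abs]

noncomputable def stateScale (lam : ℝ) (i : ℕ) : EE n m d i →L[ℝ] EE n m d i :=
  (lam⁻¹ • ContinuousLinearMap.id ℝ (Fin n → ℝ)).prodMap
    ((ContinuousLinearMap.pi fun j : Fin (i + 1) =>
        lam ^ (j : ℕ) • ContinuousLinearMap.proj (R := ℝ)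
          (φ := fun j : Fin (i + 1) => Tens n m j) j).prodMap
      (ContinuousLinearMap.pi fun j : Fin (i + 1) =>
        lam ^ (j : ℕ) • ContinuousLinearMap.proj (R := ℝ)
          (φ := fun j : Fin (i + 1) => TensZ n m d j) j))

@[simp]
theorem stateScale_apply (lam : ℝ) (i : ℕ) (q : EE n m d i) :
    stateScale lam i q = (lam⁻¹ • q.1, fun j : Fin (i + 1) => lam ^ (j : ℕ) • q.2.1 j,
      fun j : Fin (i + 1) => lam ^ (j : ℕ) • q.2.2 j) := rfl

section DerivativeScaling

variable {lam : ℝ} {i : ℕ}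

theorem stateScale_x (v : Fin n → ℝ) :
    stateScale lam i ((v, 0, 0) : EE n m d i) = lam⁻¹ • ((v, 0, 0) : EE n m d i) := by
  refine Prod.ext rfl (Prod.ext ?_ ?_) <;> funext j <;> simp

theorem stateScale_single_y (j : Fin (i + 1)) (w : Tens n m j) :
    stateScale lam i ((0, Pi.single j w, 0) : EE n m d i)
      = lam ^ (j : ℕ) • ((0, Pi.single j w, 0) : EE n m d i) := by
  refine Prod.ext (by simp) (Prod.ext ?_ (by ext; simp))
  funext j'
  by_cases h : j' = j
  · subst h; simp
  · simp [Pi.single_eq_of_ne h]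

theorem stateScale_single_z (j : Fin (i + 1)) (w : TensZ n m d j) :
    stateScale lam i ((0, 0, Pi.single j w) : EE n m d i)
      = lam ^ (j : ℕ) • ((0, 0, Pi.single j w) : EE n m d i) := by
  refine Prod.ext (by simp) (Prod.ext (by ext; simp) ?_)
  funext j'
  by_cases h : j' = j
  · subst h; simp
  · simp [Pi.single_eq_of_ne h]

variable (D : EE n m d i →L[ℝ] Tens n m i)

theorem Dyp_smul (j : Fin (i + 1)) (c : ℝ) (w : Tens n m j) :
    Dyp D j (c • w) = c • Dyp D j w := by
  have h : ((0, Pi.single j (c • w), 0) : EE n m d i) = c • (0, Pi.single j w, 0) := by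
    simp [Pi.single_smul]
  rw [Dyp, Dyp, h, map_smul]

theorem Dzp_smul (j : Fin (i + 1)) (c : ℝ) (w : TensZ n m d j) :
    Dzp D j (c • w) = c • Dzp D j w := by
  have h : ((0, 0, Pi.single j (c • w)) : EE n m d i) = c • (0, 0, Pi.single j w) := by
    simp [Pi.single_smul]
  rw [Dzp, Dzp, h, map_smul]

theorem appX_scale :
    appX (Dx ((lam ^ i)⁻¹ • D.comp (stateScale lam i))) = (lam ^ (i + 1))⁻¹ • appX (Dx D) := by
  funext a c
  simp only [appX, Dx, smul_apply, ContinuousLinearMap.comp_apply, stateScale_x, map_smul,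
    smul_smul, pow_succ, mul_inv, Pi.smul_apply]

theorem appY_Dyp_smul (j : Fin (i + 1)) (c : ℝ) (y : Tens n m (j + 1)) :
    appY (Dyp D j) (c • y) = c • appY (Dyp D j) y := by
  funext a c'
  exact congrFun (congrFun (Dyp_smul D j c _) a) (Fin.init c')

theorem appZ_Dzp_smul (j : Fin (i + 1)) (c : ℝ) (z : TensZ n m d (j + 1)) :
    appZ (Dzp D j) (c • z) = c • appZ (Dzp D j) z := by
  funext a c'
  exact congrFun (congrFun (Dzp_smul D j c _) a) (Fin.init c')

theorem appY_scale (hlam : lam ≠ 0) (j : Fin (i + 1)) (y : Tens n m (j + 1)) :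
    appY (Dyp ((lam ^ i)⁻¹ • D.comp (stateScale lam i)) j) y
      = (lam ^ (i + 1))⁻¹ • appY (Dyp D j) (lam ^ (j + 1 : ℕ) • y) := by
  rw [appY_Dyp_smul, smul_smul]
  funext a c
  simp only [appY, Dyp, smul_apply, ContinuousLinearMap.comp_apply, stateScale_single_y,
    map_smul, Pi.smul_apply, smul_eq_mul, ← mul_assoc]
  congr 1
  field_simp
  ring

theorem appZ_scale (hlam : lam ≠ 0) (j : Fin (i + 1)) (z : TensZ n m d (j + 1)) :
    appZ (Dzp ((lam ^ i)⁻¹ • D.comp (stateScale lam i)) j) z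
      = (lam ^ (i + 1))⁻¹ • appZ (Dzp D j) (lam ^ (j + 1 : ℕ) • z) := by
  rw [appZ_Dzp_smul, smul_smul]
  funext a c
  simp only [appZ, Dzp, smul_apply, ContinuousLinearMap.comp_apply, stateScale_single_z,
    map_smul, Pi.smul_apply, smul_eq_mul, ← mul_assoc]
  congr 1
  field_simp
  ring

end DerivativeScaling

theorem phiStep_scale {lam t : ℝ} {σ σ' : ℝ → Arg n m d → Sig n d}
    {μ μ' : ℝ → Arg n m d → (Fin n → ℝ)} {i : ℕ} (hlam : lam ≠ 0)
    (hσ : σ' t = fun q => lam • σ t (argScale lam q))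
    (hμ : μ' t = fun q => lam • μ t (argScale lam q))
    (D : EE n m d i →L[ℝ] Tens n m i) (x : Fin n → ℝ) (Y : (j : Fin (i + 2)) → Tens n m j)
    (Z : (j : Fin (i + 2)) → TensZ n m d j)
    (hdσ : DifferentiableAt ℝ (σ t) (argScale lam (x, Y ⟨0, by omega⟩, Z ⟨0, by omega⟩)))
    (hdμ : DifferentiableAt ℝ (μ t) (argScale lam (x, Y ⟨0, by omega⟩, Z ⟨0, by omega⟩))) :
    phiStep μ' σ' t ((lam ^ i)⁻¹ • D.comp (stateScale lam i)) x Y Z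
      = (lam ^ (i + 1))⁻¹ • phiStep μ σ t D (lam⁻¹ • x) (fun j => lam ^ (j : ℕ) • Y j)
          (fun j => lam ^ (j : ℕ) • Z j) := by
  simp only [phiStep, appX_scale, appY_scale D hlam, appZ_scale D hlam,
    hGen_scale hlam hσ hdσ, smul_inv_smul₀ (pow_ne_zero _ hlam), Amat_scale hlam hσ hdσ hμ hdμ,
    Bmat_scale hlam hσ hdσ, argScale_apply, Fin.val_succ, Fin.val_last, pow_zero, pow_one,
    one_smul, mulRight_smul, mulRight_slice_smul, inv_smul_smul₀ (pow_ne_zero _ hlam), smul_sub,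
    smul_add, Finset.smul_sum]

-- With `c = L_{σ,z}` this is the constraint `‖y⁽¹⁾‖_op < L_{σ,z}⁻¹` of `Θ_i` (vacuous for `i = 0`).
def admissible (c : ℝ) (i : ℕ) : Set (EE n m d i) :=
  {q | ∀ hi : 1 ≤ i, c * opN (q.2.1 ⟨1, Nat.succ_le_succ hi⟩) < 1}

theorem isOpen_admissible (c : ℝ) (i : ℕ) :
    IsOpen (admissible (n := n) (m := m) (d := d) c i) := by
  by_cases hi : 1 ≤ i
  · have hc : Continuous fun q : EE n m d i => c * opN (q.2.1 ⟨1, Nat.succ_le_succ hi⟩) :=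
      continuous_const.mul (continuous_opN.comp ((continuous_apply _).comp
        (continuous_fst.comp continuous_snd)))
    simpa only [admissible, hi, forall_true_left] using isOpen_lt hc continuous_const
  · simpa only [admissible, hi, IsEmpty.forall_iff, Set.ofPred_true] using isOpen_univ

section PhiScaling

variable {k : ℕ} {T Lz lam t : ℝ} {μ μ' : ℝ → Arg n m d → (Fin n → ℝ)}
  {σ σ' : ℝ → Arg n m d → Sig n d} {f f' : ℝ → Arg n m d → Tens n m 0}
  {φ φ' : (i : ℕ) → PhiFun n m d i}

theorem MLLC.differentiable_mu (h : MLLC n m d k T μ σ f Lz) (hk : 1 ≤ k)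
    (ht : t ∈ Set.Icc 0 T) :
    Differentiable ℝ (μ t) :=
  (h.smooth_mu t ht).differentiable (by exact_mod_cast Nat.one_le_iff_ne_zero.mp hk)

theorem MLLC.differentiable_sigma (h : MLLC n m d k T μ σ f Lz) (hk : 1 ≤ k)
    (ht : t ∈ Set.Icc 0 T) :
    Differentiable ℝ (σ t) :=
  (h.smooth_sigma t ht).differentiable (by exact_mod_cast Nat.one_le_iff_ne_zero.mp hk)

theorem phi_zero_scale {Lz' : ℝ} (hf : ∀ q, f' t q = f t (argScale lam q))
    (hchain : IsPhiChain n m d k T Lz μ σ f φ)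
    (hchain' : IsPhiChain n m d k T Lz' μ' σ' f' φ')
    (ht : t ∈ Set.Icc 0 T) (q : EE n m d 0) :
    φ' 0 t q = φ 0 t (stateScale lam 0 q) := by
  simp [hchain.base t ht, hchain'.base t ht, hf]

theorem phi_succ_scale (hlam : 0 < lam) (hσ : σ' t = fun q => lam • σ t (argScale lam q))
    (hμ : μ' t = fun q => lam • μ t (argScale lam q))
    (hdσ : Differentiable ℝ (σ t)) (hdμ : Differentiable ℝ (μ t))
    (hchain : IsPhiChain n m d k T Lz μ σ f φ)
    (hchain' : IsPhiChain n m d k T (lam * Lz) μ' σ' f' φ')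
    {i : ℕ} (hi : i + 1 ≤ k) (ht : t ∈ Set.Icc 0 T)
    (IH : ∀ q ∈ admissible (lam * Lz) i, φ' i t q = (lam ^ i)⁻¹ • φ i t (stateScale lam i q))
    (q : EE n m d (i + 1)) (hq : q ∈ admissible (lam * Lz) (i + 1)) :
    φ' (i + 1) t q = (lam ^ (i + 1))⁻¹ • φ (i + 1) t (stateScale lam (i + 1) q) := by
  obtain ⟨x, Y, Z⟩ := q
  have hY1 : lam * Lz * opN (Y ⟨1, by omega⟩) < 1 := hq (by omega)
  have hY1' : Lz * opN (lam ^ 1 • Y ⟨1, by omega⟩) < 1 := by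
    rwa [pow_one, opN_smul, abs_of_pos hlam, mul_left_comm, ← mul_assoc]
  obtain ⟨D', hD', hφ'⟩ := hchain'.step i hi t ht x Y Z hY1
  obtain ⟨D, hD, hφ⟩ := hchain.step i hi t ht (lam⁻¹ • x) (fun j => lam ^ (j : ℕ) • Y j)
    (fun j => lam ^ (j : ℕ) • Z j) hY1'
  set p : EE n m d i := (x, fun j => Y j.castSucc, fun j => Z j.castSucc)
  have hloc : φ' i t =ᶠ[nhds p] fun q => (lam ^ i)⁻¹ • φ i t (stateScale lam i q) :=
    Filter.eventually_of_mem ((isOpen_admissible _ i).mem_nhds fun _ => hq (by omega)) IH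
  have hD'eq : D' = (lam ^ i)⁻¹ • D.comp (stateScale lam i) :=
    hD'.unique (((hD.comp p (stateScale lam i).hasFDerivAt).const_smul _).congr_of_eventuallyEq
      hloc)
  rw [hφ', hD'eq, phiStep_scale hlam.ne' hσ hμ D x Y Z (hdσ _) (hdμ _)]
  exact congrArg _ hφ.symm

end PhiScaling

theorem scaling_of_h_and_phi_general
    {n m d : ℕ} {T : ℝ} (k : ℕ)
    (μ : ℝ → Arg n m d → (Fin n → ℝ)) (σ : ℝ → Arg n m d → Sig n d)
    (f : ℝ → Arg n m d → Tens n m 0) (Lz : ℝ)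
    (hMLLC : MLLC n m d k T μ σ f Lz)
    (lam : ℝ) (hlam : 0 < lam)
    (μ' : ℝ → Arg n m d → (Fin n → ℝ)) (σ' : ℝ → Arg n m d → Sig n d)
    (f' : ℝ → Arg n m d → Tens n m 0)
    (hμ' : ∀ t p, μ' t p = lam • μ t (lam⁻¹ • p.1, p.2.1, p.2.2))
    (hσ' : ∀ t p, σ' t p = lam • σ t (lam⁻¹ • p.1, p.2.1, p.2.2))
    (hf' : ∀ t p, f' t p = f t (lam⁻¹ • p.1, p.2.1, p.2.2))
    (φ φ' : (i : ℕ) → PhiFun n m d i)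
    (hchain : IsPhiChain n m d k T Lz μ σ f φ)
    (hchain' : IsPhiChain n m d k T (lam * Lz) μ' σ' f' φ') :
    -- scaling of h⁽¹⁾
    (1 ≤ k → ∀ t ∈ Set.Icc (0:ℝ) T, ∀ (x : Fin n → ℝ) (y0 : Tens n m 0)
      (z0 : TensZ n m d 0) (y1 : Tens n m 1) (z1 : TensZ n m d 1),
      lam * Lz * opN y1 < 1 →
      h1 σ' t (x, y0, z0) y1 z1
        = lam⁻¹ • h1 σ t (lam⁻¹ • x, y0, z0) (lam • y1) (lam • z1)) ∧
    -- scaling of h⁽ⁱ⁾ for i = K + 2 ≥ 2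
    (∀ K : ℕ, K + 2 ≤ k → ∀ t ∈ Set.Icc (0:ℝ) T, ∀ (x : Fin n → ℝ) (y0 : Tens n m 0)
      (z0 : TensZ n m d 0) (y1 : Tens n m 1) (z1 : TensZ n m d 1),
      lam * Lz * opN y1 < 1 →
      ∀ (yk : Tens n m (K + 2)) (zk : TensZ n m d (K + 2)),
        hK σ' t (x, y0, z0) y1 z1 yk zk
          = (lam ^ (K + 2))⁻¹ •
              hK σ t (lam⁻¹ • x, y0, z0) (lam • y1) (lam • z1)
                ((lam ^ (K + 2)) • yk) ((lam ^ (K + 2)) • zk)) ∧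
    -- scaling of φ⁽ⁱ⁾
    (∀ i : ℕ, i ≤ k → ∀ t ∈ Set.Icc (0:ℝ) T, ∀ (x : Fin n → ℝ)
      (Y : (j : Fin (i + 1)) → Tens n m j) (Z : (j : Fin (i + 1)) → TensZ n m d j),
      (∀ hi : 1 ≤ i, lam * Lz * opN (Y ⟨1, Nat.succ_le_succ hi⟩) < 1) →
      φ' i t (x, Y, Z)
        = (lam ^ i)⁻¹ •
            φ i t (lam⁻¹ • x, fun j => (lam ^ (j : ℕ)) • Y j,
              fun j => (lam ^ (j : ℕ)) • Z j)) := by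
  have hσt : ∀ t, σ' t = fun q => lam • σ t (argScale lam q) := fun t => funext (hσ' t)
  have hμt : ∀ t, μ' t = fun q => lam • μ t (argScale lam q) := fun t => funext (hμ' t)
  refine ⟨fun hk t ht x y0 z0 y1 z1 _ =>
      h1_scale hlam.ne' (hσt t) (hMLLC.differentiable_sigma hk ht _) y1 z1,
    fun K hK t ht x y0 z0 y1 z1 _ yK zK =>
      hK_scale hlam.ne' (hσt t) (hMLLC.differentiable_sigma (by omega) ht _) y1 z1 yK zK, ?_⟩
  intro i
  induction i with
  | zero =>
    intro _ t ht x Y Z _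
    rw [pow_zero, inv_one, one_smul]
    exact phi_zero_scale (hf' t) hchain hchain' ht (x, Y, Z)
  | succ i IH =>
    intro hi t ht x Y Z hq
    exact phi_succ_scale hlam (hσt t) (hμt t) (hMLLC.differentiable_sigma (by omega) ht)
      (hMLLC.differentiable_mu (by omega) ht) hchain hchain' hi ht
      (fun q hq => IH (by omega) t ht q.1 q.2.1 q.2.2 hq) (x, Y, Z) hq

/-- **Scaling identities (proof of Theorem 7.1).**  Assume `(μ,σ,f)` satisfies
`(k-MLLC)` and let `λ > 0`.  Define the transformed coefficients
`μ̄(t,x,y,z) := λ·μ(t,λ⁻¹x,y,z)`, `σ̄(t,x,y,z) := λ·σ(t,λ⁻¹x,y,z)` and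
`f̄(t,x,y,z) := f(t,λ⁻¹x,y,z)` (note `L_{σ̄,z} = λ·L_{σ,z}`), and let `h̄⁽ⁱ⁾, φ̄⁽ⁱ⁾` be
built from `(μ̄,σ̄,f̄)` by the same recursion as `h⁽ⁱ⁾, φ⁽ⁱ⁾` are built from `(μ,σ,f)`.
Then for all `i ∈ {0,…,k}` and all admissible arguments (`θ̄_i ∈ Θ̄_i`, the scaled
argument lying in `Θ_i`):
`h̄⁽ⁱ⁾(t,x,y⁽⁰⁾,z⁽⁰⁾,…,y⁽ⁱ⁾,z⁽ⁱ⁾) = λ^{−i} h⁽ⁱ⁾(t,λ⁻¹x,λ⁰y⁽⁰⁾,λ⁰z⁽⁰⁾,…,λⁱy⁽ⁱ⁾,λⁱz⁽ⁱ⁾)`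
for `i ≥ 1`, and
`φ̄⁽ⁱ⁾(t,x,y⁽⁰⁾,z⁽⁰⁾,…,y⁽ⁱ⁾,z⁽ⁱ⁾) = λ^{−i} φ⁽ⁱ⁾(t,λ⁻¹x,λ⁰y⁽⁰⁾,λ⁰z⁽⁰⁾,…,λⁱy⁽ⁱ⁾,λⁱz⁽ⁱ⁾)`. -/
theorem scaling_of_h_and_phi
    {n m d : ℕ} {T : ℝ} (hT : 0 < T) (k : ℕ)
    (μ : ℝ → Arg n m d → (Fin n → ℝ)) (σ : ℝ → Arg n m d → Sig n d)
    (f : ℝ → Arg n m d → Tens n m 0) (Lz : ℝ)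
    (hMLLC : MLLC n m d k T μ σ f Lz)
    (lam : ℝ) (hlam : 0 < lam)
    (μ' : ℝ → Arg n m d → (Fin n → ℝ)) (σ' : ℝ → Arg n m d → Sig n d)
    (f' : ℝ → Arg n m d → Tens n m 0)
    (hμ' : ∀ t p, μ' t p = lam • μ t (lam⁻¹ • p.1, p.2.1, p.2.2))
    (hσ' : ∀ t p, σ' t p = lam • σ t (lam⁻¹ • p.1, p.2.1, p.2.2))
    (hf' : ∀ t p, f' t p = f t (lam⁻¹ • p.1, p.2.1, p.2.2))
    (φ φ' : (i : ℕ) → PhiFun n m d i)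
    (hchain : IsPhiChain n m d k T Lz μ σ f φ)
    (hchain' : IsPhiChain n m d k T (lam * Lz) μ' σ' f' φ') :
    -- scaling of h⁽¹⁾
    (1 ≤ k → ∀ t ∈ Set.Icc (0:ℝ) T, ∀ (x : Fin n → ℝ) (y0 : Tens n m 0)
      (z0 : TensZ n m d 0) (y1 : Tens n m 1) (z1 : TensZ n m d 1),
      lam * Lz * opN y1 < 1 →
      h1 σ' t (x, y0, z0) y1 z1
        = lam⁻¹ • h1 σ t (lam⁻¹ • x, y0, z0) (lam • y1) (lam • z1)) ∧
    -- scaling of h⁽ⁱ⁾ for i = K + 2 ≥ 2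
    (∀ K : ℕ, K + 2 ≤ k → ∀ t ∈ Set.Icc (0:ℝ) T, ∀ (x : Fin n → ℝ) (y0 : Tens n m 0)
      (z0 : TensZ n m d 0) (y1 : Tens n m 1) (z1 : TensZ n m d 1),
      lam * Lz * opN y1 < 1 →
      ∀ (yk : Tens n m (K + 2)) (zk : TensZ n m d (K + 2)),
        hK σ' t (x, y0, z0) y1 z1 yk zk
          = (lam ^ (K + 2))⁻¹ •
              hK σ t (lam⁻¹ • x, y0, z0) (lam • y1) (lam • z1)
                ((lam ^ (K + 2)) • yk) ((lam ^ (K + 2)) • zk)) ∧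
    -- scaling of φ⁽ⁱ⁾
    (∀ i : ℕ, i ≤ k → ∀ t ∈ Set.Icc (0:ℝ) T, ∀ (x : Fin n → ℝ)
      (Y : (j : Fin (i + 1)) → Tens n m j) (Z : (j : Fin (i + 1)) → TensZ n m d j),
      (∀ hi : 1 ≤ i, lam * Lz * opN (Y ⟨1, Nat.succ_le_succ hi⟩) < 1) →
      φ' i t (x, Y, Z)
        = (lam ^ i)⁻¹ •
            φ i t (lam⁻¹ • x, fun j => (lam ^ (j : ℕ)) • Y j,
              fun j => (lam ^ (j : ℕ)) • Z j)) :=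
  scaling_of_h_and_phi_general k μ σ f Lz hMLLC lam hlam μ' σ' f' hμ' hσ' hf' φ φ' hchain hchain'

end DecouplingFBSDE
end
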